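/- arXiv:1211.0258 — 7 statements merged into one kernel-verified Lean document; each statement's English description precedes it below -/
import Mathlib

section
/- Let C = { \lambda \in \mathbb{R}^n : A\lambda \ge 0 } be a simple polyhedral cone, where A is an n×n lower triangular real matrix with positive entries on the diagonal, and denote the rows of A as linear functionals \alpha^1, ..., \alpha^n on \mathbb{R}^n. Define a point c \in \mathbb{Z}^n greedily: for i = 1, ..., n, choose c_i \in \mathbb{Z} minimal so that \alpha^i(c_1, ..., c_i) > 0 (this is possible since the diagonal entries of A are positive). Then c lies in the interior of C, and if C is Gorenstein, then c is the unique Gorenstein point of C. -/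
noncomputable section

open scoped Classical

/-- The set of integer lattice points in `ℝ^n`. -/
def intLattice (n : ℕ) : Set (Fin n → ℝ) :=
  Set.range (fun (m : Fin n → ℤ) => fun i => (m i : ℝ))

/-- `c` is a Gorenstein point of `C`: an integer point in the interior of `C`
with `C° ∩ ℤ^n = c + (C ∩ ℤ^n)`. -/
def IsGorensteinPoint {n : ℕ} (C : Set (Fin n → ℝ)) (c : Fin n → ℝ) : Prop :=
  c ∈ interior C ∧ c ∈ intLattice n ∧
    interior C ∩ intLattice n = (fun x => c + x) '' (C ∩ intLattice n)

/-- A cone is Gorenstein if it has a Gorenstein point. -/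
def IsGorensteinCone {n : ℕ} (C : Set (Fin n → ℝ)) : Prop :=
  ∃ c, IsGorensteinPoint C c

/-- The `s`-lecture hall cone `{λ : 0 ≤ λ₁/s₁ ≤ λ₂/s₂ ≤ ⋯ ≤ λₙ/sₙ}`,
where coordinate `i : Fin n` corresponds to the mathematical index `i+1`. -/
def lhCone (n : ℕ) (s : ℕ → ℤ) : Set (Fin n → ℝ) :=
  {x | (∀ i : Fin n, (i : ℕ) = 0 → 0 ≤ x i / (s 1 : ℝ)) ∧
       (∀ i j : Fin n, (j : ℕ) = (i : ℕ) + 1 →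
          x i / (s ((i : ℕ) + 1) : ℝ) ≤ x j / (s ((j : ℕ) + 1) : ℝ))}

/-- The `s`-lecture hall partitions of length `n`: integer points of the cone. -/
def lhPartitions (n : ℕ) (s : ℕ → ℤ) : Set (Fin n → ℤ) :=
  {lam | (fun i => (lam i : ℝ)) ∈ lhCone n s}

/-- The generating function `f_n^{(s)}(q) = ∑_{λ ∈ L_n^{(s)}} q^{|λ|}` as a power series. -/
def lhGenFun (n : ℕ) (s : ℕ → ℤ) : PowerSeries ℚ :=
  PowerSeries.mk fun m =>
    (Set.ncard {lam : Fin n → ℤ | lam ∈ lhPartitions n s ∧ ∑ i, lam i = (m : ℤ)} : ℚ)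

/-- A rational function `r(q)` is self-reciprocal if `r(1/q) = ± q^k r(q)`
for some nonnegative integer `k`. -/
def SelfReciprocalRat (r : RatFunc ℚ) : Prop :=
  ∃ k : ℕ, RatFunc.eval (algebraMap ℚ (RatFunc ℚ)) (RatFunc.X)⁻¹ r = RatFunc.X ^ k * r ∨
           RatFunc.eval (algebraMap ℚ (RatFunc ℚ)) (RatFunc.X)⁻¹ r = -(RatFunc.X ^ k * r)

/-- A power series is self-reciprocal as a rational function: it is the power series
expansion of a rational function `H/D` (with `D(0) ≠ 0`) which is self-reciprocal. -/
def GenFunSelfReciprocal (f : PowerSeries ℚ) : Prop :=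
  ∃ H D : Polynomial ℚ, D.coeff 0 ≠ 0 ∧
    (↑H : PowerSeries ℚ) = f * (↑D : PowerSeries ℚ) ∧
    SelfReciprocalRat (algebraMap (Polynomial ℚ) (RatFunc ℚ) H /
      algebraMap (Polynomial ℚ) (RatFunc ℚ) D)

/-- The polyhedral cone `{x ∈ ℝ^n : Ax ≥ 0}`. -/
def matCone (n : ℕ) (A : Matrix (Fin n) (Fin n) ℝ) : Set (Fin n → ℝ) :=
  {x | ∀ i, 0 ≤ ∑ j, A i j * x j}

/-- Let `C = {x : Ax ≥ 0}` with `A` lower triangular with positive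
diagonal. The greedily chosen integer point `c` (each `cᵢ` minimal with
`αⁱ(c₁,…,cᵢ) > 0`) lies in the interior of `C`, and if `C` is Gorenstein then `c` is
its unique Gorenstein point. -/
theorem stmt2 (n : ℕ) (A : Matrix (Fin n) (Fin n) ℝ)
    (hlt : ∀ i j : Fin n, i < j → A i j = 0)
    (hdiag : ∀ i, 0 < A i i)
    (c : Fin n → ℤ)
    (hc : ∀ i, 0 < ∑ j, A i j * (c j : ℝ))
    (hmin : ∀ i, ∀ z : ℤ, z < c i →
      ¬ 0 < ∑ j, A i j * Function.update (fun k => (c k : ℝ)) i (z : ℝ) j) :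
    (fun i => (c i : ℝ)) ∈ interior (matCone n A) ∧
    (IsGorensteinCone (matCone n A) →
      IsGorensteinPoint (matCone n A) (fun i => (c i : ℝ)) ∧
      ∀ c' : Fin n → ℝ, IsGorensteinPoint (matCone n A) c' →
        c' = fun i => (c i : ℝ)) := by
  classical
  -- the open set of strictly positive points
  set U : Set (Fin n → ℝ) := {x | ∀ i, 0 < ∑ j, A i j * x j} with hU
  have hUopen : IsOpen U := by
    have : U = ⋂ i : Fin n, (fun x : Fin n → ℝ => ∑ j, A i j * x j) ⁻¹' Set.Ioi 0 := by
      ext x; simp [hU, Set.mem_iInter]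
    rw [this]
    exact isOpen_iInter_of_finite fun i =>
      (Continuous.isOpen_preimage (by continuity) _ isOpen_Ioi)
  have hUsub : U ⊆ matCone n A := fun x hx i => (hx i).le
  -- c lies in the interior
  have hcint : (fun i => (c i : ℝ)) ∈ interior (matCone n A) :=
    mem_interior.mpr ⟨U, hUsub, hUopen, hc⟩
  -- interior points satisfy strict inequalities
  have hstrict : ∀ x ∈ interior (matCone n A), ∀ i, 0 < ∑ j, A i j * x j := by
    intro x hx i
    rw [mem_interior_iff_mem_nhds, Metric.mem_nhds_iff] at hx
    obtain ⟨ε, hε, hball⟩ := hx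
    set y : Fin n → ℝ := fun j => x j - (ε/2) * (if j = i then (1:ℝ) else 0) with hy
    have hyball : y ∈ Metric.ball x ε := by
      rw [Metric.mem_ball, dist_pi_lt_iff hε]
      intro b
      simp only [hy, Real.dist_eq]
      rcases eq_or_ne b i with rfl | hb
      · rw [if_pos rfl]
        rw [show x b - ε / 2 * 1 - x b = -(ε/2) by ring, abs_neg,
          abs_of_nonneg (by linarith : (0:ℝ) ≤ ε/2)]
        linarith
      · rw [if_neg hb]
        simpa using hε
    have hyC := hball hyball i
    have hsum : ∑ j, A i j * y j = (∑ j, A i j * x j) - (ε/2) * A i i := by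
      have : ∀ j, A i j * y j = A i j * x j - (if j = i then (ε/2) * A i i else 0) := by
        intro j
        simp only [hy]
        rcases eq_or_ne j i with rfl | hj
        · rw [if_pos rfl, if_pos rfl]; ring
        · rw [if_neg hj, if_neg hj]; ring
      rw [Finset.sum_congr rfl fun j _ => this j, Finset.sum_sub_distrib,
        Finset.sum_ite_eq' Finset.univ i fun _ => (ε/2) * A i i]
      simp
    have := hdiag i
    rw [hsum] at hyC
    nlinarith
  -- any Gorenstein point equals c
  have uniq : ∀ c' : Fin n → ℝ, IsGorensteinPoint (matCone n A) c' →
      c' = fun i => (c i : ℝ) := by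
    intro c' ⟨hc'int, hc'lat, hc'eq⟩
    -- c is in interior ∩ lattice, hence c = c' + d with d ∈ C ∩ lattice
    have hcmem : (fun i => (c i : ℝ)) ∈ interior (matCone n A) ∩ intLattice n :=
      ⟨hcint, ⟨c, rfl⟩⟩
    rw [hc'eq] at hcmem
    obtain ⟨x, ⟨hxC, hxlat⟩, hxeq⟩ := hcmem
    obtain ⟨d, rfl⟩ := hxlat
    -- c' j = c j - d j
    have hcd : ∀ j, c' j = (c j : ℝ) - (d j : ℝ) := by
      intro j
      have := congrFun hxeq j
      simp only [Pi.add_apply] at this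
      linarith
    -- d = 0 by strong induction
    have key : ∀ i : Fin n, d i = 0 := by
      have H : ∀ m : ℕ, ∀ i : Fin n, (i:ℕ) = m → d i = 0 := by
        intro m
        induction m using Nat.strong_induction_on with
        | _ m IH =>
          intro i him
          have IH' : ∀ j : Fin n, j < i → d j = 0 :=
            fun j hj => IH (j:ℕ) (him ▸ hj) j rfl
          -- 0 ≤ d i since (Ad)_i = A i i * d i ≥ 0
          have hAd : ∑ j, A i j * (d j : ℝ) = A i i * (d i : ℝ) := by
            rw [Finset.sum_eq_single i]
            · intro j _ hj
              rcases lt_or_gt_of_ne hj with h1 | h2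
              · rw [IH' j h1]; simp
              · rw [hlt i j h2, zero_mul]
            · simp
          have hd0 : (0:ℝ) ≤ A i i * (d i : ℝ) := hAd ▸ hxC i
          have hdge : (0:ℝ) ≤ (d i : ℝ) := nonneg_of_mul_nonneg_right hd0 (hdiag i)
          -- d i ≤ 0 by minimality of c i
          by_contra hne
          have hdpos : 0 < d i := by
            rcases lt_trichotomy (d i) 0 with h | h | h
            · exact absurd (by exact_mod_cast hdge) (not_le.mpr h)
            · exact absurd h hne
            · exact h
          have hz : c i - d i < c i := by omega
          apply hmin i (c i - d i) hz
          have heq : ∑ j, A i j * Function.update (fun k => (c k : ℝ)) i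
              ((c i - d i : ℤ) : ℝ) j = ∑ j, A i j * c' j := by
            apply Finset.sum_congr rfl
            intro j _
            rcases eq_or_ne j i with rfl | hj
            · rw [Function.update_self, hcd j]
              push_cast
              ring
            · rw [Function.update_of_ne hj]
              rcases lt_or_gt_of_ne hj with h1 | h2
              · rw [hcd j, IH' j h1]
                simp
              · rw [hlt i j h2, zero_mul, zero_mul]
          rw [heq]
          exact hstrict c' hc'int i
      exact fun i => H i i rfl
    funext j
    rw [hcd j, key j]
    simp
  refine ⟨hcint, fun hG => ?_⟩
  obtain ⟨c', hc'⟩ := hG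
  have := uniq c' hc'
  rw [this] at hc'
  exact ⟨hc', uniq⟩
end
end

section
/- For a sequence s = (s_1, s_2, ...) of positive integers, the s-lecture hall cone C_n^{(s)} is Gorenstein if and only if there exists c \in \mathbb{Z}^n satisfying c_1 = 1 and c_j s_{j-1} = c_{j-1} s_j + \gcd(s_j, s_{j-1}) for all 1 < j \le n. -/
/-!
The lecture hall cone is simplicial: it is cut out by the facet functionals `ℓ₁ = λ₁` and
`ℓⱼ = s_{j-1} λⱼ - sⱼ λ_{j-1}` (`1 < j ≤ n`). On `ℤⁿ` the value of `ℓⱼ` is a multiple of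
`gⱼ = gcd(sⱼ, s_{j-1})` (with `g₁ = 1`), so the interior lattice points are those with `ℓ ≥ g`
coordinatewise, while `λ - c ∈ C` means `ℓ(λ) ≥ ℓ(c)`. Hence `c` is a Gorenstein point iff
`{ℓ ≥ g} = {ℓ ≥ ℓ(c)}` on `ℤⁿ`, i.e. iff `ℓ(c) = g`: each bound `gⱼ` is attained by an interior
lattice point, built from a Bézout pair at positions `j - 1, j` and a fast-growing sequence
elsewhere.
-/

noncomputable section

open scoped Classical

open Set

theorem interior_setOf_forall_nonneg {ι E : Type*} [Finite ι] [NormedAddCommGroup E]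
    [NormedSpace ℝ E] [FiniteDimensional ℝ E] (f : ι → E →ₗ[ℝ] ℝ) (hf : ∀ k, f k ≠ 0) :
    interior {x | ∀ k, 0 ≤ f k x} = {x | ∀ k, 0 < f k x} := by
  have hhalf (k : ι) : interior (f k ⁻¹' Ici 0) = f k ⁻¹' Ioi 0 := by
    rw [← interior_Ici, (IsModuleTopology.isOpenMap_of_surjective
      (LinearMap.surjective_of_ne_zero (hf k))).preimage_interior_eq_interior_preimage
      (f k).continuous_of_finiteDimensional]
  have hcone : {x | ∀ k, 0 ≤ f k x} = ⋂ k, f k ⁻¹' Ici 0 := by ext; simp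
  rw [hcone, interior_iInter_of_finite]
  simp only [hhalf]
  ext; simp

theorem eq_of_le_iff_le_of_attained {M ι α : Type*} [PartialOrder α] {f : M → ι → α} {g : ι → α}
    {c : M} (h : ∀ m, g ≤ f m ↔ f c ≤ f m) (hg : ∀ k, ∃ m, g ≤ f m ∧ f m k = g k) :
    f c = g := by
  refine le_antisymm (fun k => ?_) ((h c).2 le_rfl)
  obtain ⟨m, hm, hmk⟩ := hg k
  exact hmk ▸ (h m).1 hm k

theorem exists_large_mul_sub_mul_eq_gcd {a b : ℤ} (hb : 0 < b) (M : ℤ) :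
    ∃ u v : ℤ, M ≤ u ∧ b * v - a * u = Int.gcd a b := by
  set t := |M + a.gcdA b|
  refine ⟨-a.gcdA b + t * b, a.gcdB b + t * a, ?_, ?_⟩
  · nlinarith [le_abs_self (M + a.gcdA b), abs_nonneg (M + a.gcdA b)]
  · rw [Int.gcd_eq_gcd_ab]; ring

theorem isGorensteinCone_iff {n : ℕ} {C : Set (Fin n → ℝ)} (h0 : 0 ∈ C) :
    IsGorensteinCone C ↔ ∃ c : Fin n → ℤ, ∀ m : Fin n → ℤ,
      (fun i => (m i : ℝ)) ∈ interior C ↔ (fun i => ((m - c) i : ℝ)) ∈ C := by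
  constructor
  · rintro ⟨_, -, ⟨c, rfl⟩, hC⟩
    refine ⟨c, fun m => ?_⟩
    have hm := Set.ext_iff.1 hC fun i => (m i : ℝ)
    simp only [mem_inter_iff, intLattice, mem_range, exists_apply_eq_apply, and_true,
      mem_image] at hm
    rw [hm]
    constructor
    · rintro ⟨_, ⟨hw, w, rfl⟩, hcw⟩
      convert hw using 2 with i
      have := congrFun hcw i
      simp only [Pi.add_apply] at this
      simp only [Pi.sub_apply, Int.cast_sub]
      linarith
    · exact fun h => ⟨_, ⟨h, m - c, rfl⟩, by ext; simp⟩
  · rintro ⟨c, hc⟩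
    refine ⟨_, (hc c).2 (by convert h0; simp), ⟨c, rfl⟩, ?_⟩
    ext x
    constructor
    · rintro ⟨hx, m, rfl⟩
      exact ⟨_, ⟨(hc m).1 hx, m - c, rfl⟩, by ext; simp⟩
    · rintro ⟨_, ⟨hw, w, rfl⟩, rfl⟩
      have hcw : (fun i => (c i : ℝ)) + (fun i => (w i : ℝ)) = fun i => ((c + w) i : ℝ) := by
        ext; simp
      beta_reduce
      rw [hcw]
      exact ⟨(hc (c + w)).2 (by simpa using hw), c + w, rfl⟩

-- Coordinate `k` stands for `λ_{k+1}`: for `k ≠ 0` component `k` is `s_k λ_{k+1} - s_{k+1} λ_k`,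
-- which has the sign of `λ_{k+1}/s_{k+1} - λ_k/s_k`.
def lhFacets (R : Type*) [CommRing R] (s : ℕ → ℤ) {n : ℕ} : (Fin n → R) →ₗ[R] Fin n → R where
  toFun x k := if (k : ℕ) = 0 then x k else s k * x k - s (k + 1) * x ⟨k - 1, by omega⟩
  map_add' x y := by ext k; simp only [Pi.add_apply]; split_ifs <;> ring
  map_smul' a x := by
    ext k; simp only [Pi.smul_apply, smul_eq_mul, RingHom.id_apply]; split_ifs <;> ring

def lhGaps (s : ℕ → ℤ) {n : ℕ} : Fin n → ℤ :=
  fun k => if (k : ℕ) = 0 then 1 else Int.gcd (s (k + 1)) (s k)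

section LectureHall

variable {n : ℕ} {s : ℕ → ℤ}

theorem lhFacets_apply (R : Type*) [CommRing R] (x : Fin n → R) (k : Fin n) :
    lhFacets R s x k =
      if (k : ℕ) = 0 then x k else s k * x k - s (k + 1) * x ⟨k - 1, by omega⟩ := rfl

theorem lhFacets_intCast (R : Type*) [CommRing R] (m : Fin n → ℤ) :
    lhFacets R s (fun i => (m i : R)) = fun k => (lhFacets ℤ s m k : R) := by
  ext k
  simp only [lhFacets_apply]
  split_ifs <;> push_cast <;> rfl

theorem lhGaps_pos (hs : ∀ i, 1 ≤ i → 0 < s i) (k : Fin n) : 0 < lhGaps s k := by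
  unfold lhGaps
  split_ifs
  · exact one_pos
  · exact Int.natCast_pos.2 (Int.gcd_pos_of_ne_zero_left _ (hs _ (by omega)).ne')

theorem lhGaps_dvd_lhFacets (m : Fin n → ℤ) (k : Fin n) : lhGaps s k ∣ lhFacets ℤ s m k := by
  simp only [lhGaps, lhFacets_apply, Int.cast_id]
  split_ifs
  · exact one_dvd _
  · exact dvd_sub ((Int.gcd_dvd_right _ _).mul_right _) ((Int.gcd_dvd_left _ _).mul_right _)

theorem mem_lhCone_iff (hs : ∀ i, 1 ≤ i → 0 < s i) {x : Fin n → ℝ} :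
    x ∈ lhCone n s ↔ 0 ≤ lhFacets ℝ s x := by
  have hs' (i : ℕ) (hi : 1 ≤ i) : (0 : ℝ) < s i := Int.cast_pos.2 (hs i hi)
  simp only [lhCone, mem_ofPred_eq, Pi.le_def, Pi.zero_apply, lhFacets_apply]
  constructor
  · rintro ⟨hfirst, hstep⟩ k
    split_ifs with hk
    · simpa [le_div_iff₀ (hs' 1 le_rfl)] using hfirst k hk
    · have h := hstep ⟨k - 1, by omega⟩ k (by simp; omega)
      simp only [show (k : ℕ) - 1 + 1 = k by omega] at h
      rw [div_le_div_iff₀ (hs' _ (by omega)) (hs' _ (by omega))] at h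
      linarith
  · intro h
    refine ⟨fun i hi => ?_, fun i j hij => ?_⟩
    · have hfirst := h i
      rw [if_pos hi] at hfirst
      exact div_nonneg hfirst (hs' 1 le_rfl).le
    · have hstep := h j
      have hpred : (⟨j - 1, by omega⟩ : Fin n) = i := Fin.ext (by simp; omega)
      rw [if_neg (by omega), hpred, hij] at hstep
      rw [div_le_div_iff₀ (hs' _ (by omega)) (hs' _ (by omega)), hij]
      linarith

theorem interior_lhCone (hs : ∀ i, 1 ≤ i → 0 < s i) :
    interior (lhCone n s) = {x | ∀ k, 0 < lhFacets ℝ s x k} := by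
  have hcone : lhCone n s = {x | ∀ k, 0 ≤ (LinearMap.proj k ∘ₗ lhFacets ℝ s) x} := by
    ext x; exact mem_lhCone_iff hs
  rw [hcone, interior_setOf_forall_nonneg]
  · rfl
  intro k hk
  have hsingle := LinearMap.congr_fun hk (Pi.single k 1)
  simp only [LinearMap.comp_apply, LinearMap.proj_apply, lhFacets_apply,
    LinearMap.zero_apply] at hsingle
  split_ifs at hsingle with hk0
  · simp at hsingle
  · have hne : (⟨k - 1, by omega⟩ : Fin n) ≠ k := by simp [Fin.ext_iff]; omega
    simp only [Pi.single_eq_same, Pi.single_eq_of_ne hne] at hsingle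
    simp only [mul_one, mul_zero, sub_zero, Int.cast_eq_zero] at hsingle
    exact (hs k (by omega)).ne' hsingle

theorem intCast_mem_lhCone_iff (hs : ∀ i, 1 ≤ i → 0 < s i) (m : Fin n → ℤ) :
    (fun i => (m i : ℝ)) ∈ lhCone n s ↔ 0 ≤ lhFacets ℤ s m := by
  simp [mem_lhCone_iff hs, lhFacets_intCast, Pi.le_def]

theorem intCast_mem_interior_lhCone_iff (hs : ∀ i, 1 ≤ i → 0 < s i) (m : Fin n → ℤ) :
    (fun i => (m i : ℝ)) ∈ interior (lhCone n s) ↔ lhGaps s ≤ lhFacets ℤ s m := by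
  simp only [interior_lhCone hs, mem_ofPred_eq, lhFacets_intCast, Int.cast_pos, Pi.le_def]
  exact forall_congr' fun k =>
    ⟨(Int.le_of_dvd · (lhGaps_dvd_lhFacets m k)), (lhGaps_pos hs k).trans_le⟩

-- Grows fast enough that all facets except possibly those at `p` and `p + 1` are positive.
def lhWitness (s : ℕ → ℤ) (p : ℕ) (u v : ℤ) : ℕ → ℤ
  | 0 => if p = 0 then u else 1
  | k + 1 =>
    if k + 1 = p then u else if k + 1 = p + 1 then v else s (k + 2) * lhWitness s p u v k + 1

theorem lhWitness_self (p : ℕ) (u v : ℤ) : lhWitness s p u v p = u := by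
  cases p <;> simp [lhWitness]

theorem lhWitness_succ_self (p : ℕ) (u v : ℤ) : lhWitness s p u v (p + 1) = v := by
  simp [lhWitness]

theorem lhWitness_congr_of_lt {p k : ℕ} (hk : k < p) (u v u' v' : ℤ) :
    lhWitness s p u v k = lhWitness s p u' v' k := by
  induction k with
  | zero => simp [lhWitness, hk.ne']
  | succ k ih =>
    simp only [lhWitness, if_neg hk.ne, if_neg (show k + 1 ≠ p + 1 by omega), ih (by omega)]

theorem one_le_lhWitness (hs : ∀ i, 1 ≤ i → 0 < s i) {p : ℕ} {u v : ℤ} (hu : 1 ≤ u)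
    (hv : 1 ≤ v) (k : ℕ) : 1 ≤ lhWitness s p u v k := by
  induction k with
  | zero => unfold lhWitness; split_ifs <;> omega
  | succ k ih =>
    have := hs (k + 2) (by omega)
    unfold lhWitness; split_ifs
    · exact hu
    · exact hv
    · nlinarith

theorem lhFacets_lhWitness_pos (hs : ∀ i, 1 ≤ i → 0 < s i) {p : ℕ} {u v : ℤ} (hu : 1 ≤ u)
    (hv : 1 ≤ v) (k : Fin n) (hkp : (k : ℕ) ≠ p) (hkp' : (k : ℕ) ≠ p + 1) :
    0 < lhFacets ℤ s (fun i => lhWitness s p u v i) k := by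
  simp only [lhFacets_apply, Int.cast_id]
  split_ifs with hk0
  · exact one_le_lhWitness hs hu hv _
  obtain ⟨j, hj⟩ : ∃ j, (k : ℕ) = j + 1 := ⟨k - 1, by omega⟩
  have hstep : lhWitness s p u v (j + 1) = s (j + 2) * lhWitness s p u v j + 1 := by
    simp [lhWitness, ← hj, hkp, hkp']
  simp only [hj, add_tsub_cancel_right, hstep, show j + 1 + 1 = j + 2 from rfl]
  have hprod : 0 ≤ s (j + 2) * lhWitness s p u v j :=
    mul_nonneg (hs (j + 2) (by omega)).le (by linarith [one_le_lhWitness (p := p) hs hu hv j])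
  have h1 : 1 ≤ s (j + 1) := hs (j + 1) (by omega)
  nlinarith [mul_le_mul_of_nonneg_right h1 hprod]

theorem exists_lhFacets_pos_eq_lhGaps (hs : ∀ i, 1 ≤ i → 0 < s i) (q : Fin n) :
    ∃ m : Fin n → ℤ, (∀ k ≠ q, 0 < lhFacets ℤ s m k) ∧ lhFacets ℤ s m q = lhGaps s q := by
  obtain hq0 | ⟨p, hqp⟩ : (q : ℕ) = 0 ∨ ∃ p, (q : ℕ) = p + 1 := by
    rcases (q : ℕ) with _ | p <;> simp
  · -- with `p = n` the Bézout pair lies outside the coordinates `< n`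
    refine ⟨fun i => lhWitness s n 1 1 i,
      fun k _ => lhFacets_lhWitness_pos hs le_rfl le_rfl k (by omega) (by omega), ?_⟩
    simp [lhFacets_apply, lhGaps, hq0, lhWitness]
  obtain ⟨u, v, hu, huv⟩ := exists_large_mul_sub_mul_eq_gcd (a := s (p + 2))
    (hs (p + 1) (by omega)) (max 1 (s (p + 1) * lhWitness s p 1 1 (p - 1) + 1))
  have hu1 : 1 ≤ u := le_of_max_le_left hu
  have hv1 : 1 ≤ v := by
    have hg : (0 : ℤ) < Int.gcd (s (p + 2)) (s (p + 1)) :=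
      Int.natCast_pos.2 (Int.gcd_pos_of_ne_zero_left _ (hs (p + 2) (by omega)).ne')
    nlinarith [hs (p + 1) (by omega), hs (p + 2) (by omega)]
  refine ⟨fun i => lhWitness s p u v i, fun k hkq => ?_, ?_⟩
  · rcases eq_or_ne (k : ℕ) p with hkp | hkp
    · simp only [lhFacets_apply, Int.cast_id, hkp, lhWitness_self]
      split_ifs with hp0
      · exact hu1
      · rw [lhWitness_congr_of_lt (by omega) u v 1 1]
        nlinarith [le_of_max_le_right hu, hs p (by omega)]
    · exact lhFacets_lhWitness_pos hs hu1 hv1 k hkp (fun h => hkq (Fin.ext (by omega)))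
  · simp [lhFacets_apply, lhGaps, hqp, lhWitness_self, lhWitness_succ_self]
    linarith

theorem isGorensteinCone_lhCone_iff (hs : ∀ i, 1 ≤ i → 0 < s i) :
    IsGorensteinCone (lhCone n s) ↔ ∃ c : Fin n → ℤ, lhFacets ℤ s c = lhGaps s := by
  rw [isGorensteinCone_iff ((mem_lhCone_iff hs).2 (by simp))]
  simp only [intCast_mem_interior_lhCone_iff hs, intCast_mem_lhCone_iff hs, map_sub, sub_nonneg]
  refine exists_congr fun c =>
    ⟨fun h => eq_of_le_iff_le_of_attained h fun q => ?_, fun h m => by rw [h]⟩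
  obtain ⟨m, hpos, hq⟩ := exists_lhFacets_pos_eq_lhGaps hs q
  refine ⟨m, fun k => ?_, hq⟩
  rcases eq_or_ne k q with rfl | hk
  · exact hq.ge
  · exact Int.le_of_dvd (hpos k hk) (lhGaps_dvd_lhFacets m k)

theorem exists_lhFacets_eq_lhGaps_iff :
    (∃ c : Fin n → ℤ, lhFacets ℤ s c = lhGaps s) ↔
      ∃ c : ℕ → ℤ, c 1 = 1 ∧ ∀ j, 1 < j → j ≤ n →
        c j * s (j - 1) = c (j - 1) * s j + (Int.gcd (s j) (s (j - 1)) : ℤ) := by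
  constructor
  · rintro ⟨c, hc⟩
    refine ⟨fun j => if h : j - 1 < n then c ⟨j - 1, h⟩ else 1, ?_, fun j hj hjn => ?_⟩
    · dsimp only
      split_ifs with h
      · simpa [lhFacets_apply, lhGaps] using congrFun hc ⟨0, h⟩
      · rfl
    · have hk := congrFun hc ⟨j - 1, by omega⟩
      simp only [lhFacets_apply, lhGaps, Int.cast_id, if_neg (show j - 1 ≠ 0 by omega),
        show j - 1 + 1 = j by omega] at hk
      dsimp only
      rw [dif_pos (show j - 1 < n by omega), dif_pos (show j - 1 - 1 < n by omega)]
      linarith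
  · rintro ⟨c, hc1, hc⟩
    refine ⟨fun i => c (i + 1), funext fun k => ?_⟩
    simp only [lhFacets_apply, lhGaps, Int.cast_id]
    split_ifs with hk
    · simpa [hk] using hc1
    · have := hc (k + 1) (by omega) (by omega)
      simp only [add_tsub_cancel_right, show (k : ℕ) - 1 + 1 = k by omega] at this ⊢
      linarith

end LectureHall

/-- For a sequence `s` of positive integers, `C_n^{(s)}` is Gorenstein
iff there exists an integer point `c` with `c₁ = 1` and
`cⱼ s_{j-1} = c_{j-1} sⱼ + gcd(sⱼ, s_{j-1})` for all `1 < j ≤ n`. -/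
theorem stmt5 (n : ℕ) (s : ℕ → ℤ) (hs : ∀ i, 1 ≤ i → 0 < s i) :
    IsGorensteinCone (lhCone n s) ↔
      ∃ c : ℕ → ℤ, c 1 = 1 ∧ ∀ j, 1 < j → j ≤ n →
        c j * s (j - 1) = c (j - 1) * s j + (Int.gcd (s j) (s (j - 1)) : ℤ) :=
  (isGorensteinCone_lhCone_iff hs).trans exists_lhFacets_eq_lhGaps_iff
end
end

section
/- Let \ell and b be nonzero integers and define the sequence s by s_0 = 0, s_1 = 1, and s_j = \ell s_{j-1} + b s_{j-2} for j \ge 2. Then s_j > 0 for all j \ge 1 if and only if \ell > 0 and \ell^2 + 4b \ge 0. -/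
/-!
Write `D = ℓ² + 4b`. If `ℓ > 0` and `D ≥ 0`, the inequality `ℓ sₖ ≤ 2 sₖ₊₁` propagates along the
recurrence and keeps the sequence positive. Conversely, if the sequence stays positive then
`ℓ = s₂ > 0`, and if moreover `D < 0` then `b < 0`, so the ratios `rₖ = sₖ₊₂ / sₖ₊₁` lie in
`(0, ℓ]` and obey `rₖ₊₁ = ℓ + b / rₖ`. The map `r ↦ ℓ + b / r` has no fixed point, and on `(0, ℓ]`
it lowers `r` by at least `-D / (4ℓ)`; so the ratios eventually become negative.
-/

section OrderedRing

variable {R : Type*} [CommRing R] [LinearOrder R] [IsStrictOrderedRing R]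

theorem pos_of_discrim_nonneg {ℓ b : R} {s : ℕ → R} (hℓ : 0 < ℓ) (hD : 0 ≤ ℓ ^ 2 + 4 * b)
    (hs0 : s 0 = 0) (hs1 : s 1 = 1) (hrec : ∀ k, s (k + 2) = ℓ * s (k + 1) + b * s k) (k : ℕ) :
    0 < s (k + 1) := by
  suffices h : ∀ k, 0 < s (k + 1) ∧ ℓ * s (k + 1) ≤ 2 * s (k + 2) from (h k).1
  intro k
  induction k with
  | zero =>
    have hs2 : s 2 = ℓ := by simpa [hs0, hs1] using hrec 0
    rw [hs1, hs2]
    exact ⟨one_pos, by linarith⟩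
  | succ n ih =>
    obtain ⟨hpos, hle⟩ := ih
    have hpos' : 0 < s (n + 2) := by nlinarith
    refine ⟨hpos', ?_⟩
    -- `2 sₙ₊₃ - ℓ sₙ₊₂ = ℓ (2 sₙ₊₂ - ℓ sₙ₊₁) / 2 + D sₙ₊₁ / 2`
    have h₁ : ℓ * (ℓ * s (n + 1)) ≤ ℓ * (2 * s (n + 2)) := mul_le_mul_of_nonneg_left hle hℓ.le
    have h₂ : 0 ≤ (ℓ ^ 2 + 4 * b) * s (n + 1) := mul_nonneg hD hpos.le
    rw [hrec (n + 1)]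
    nlinarith

end OrderedRing

section OrderedField

variable {K : Type*} [Field K] [LinearOrder K] [IsStrictOrderedRing K]

theorem add_div_le_add_discrim_div {ℓ b r : K} (hℓ : 0 < ℓ) (hD : ℓ ^ 2 + 4 * b < 0)
    (hr : 0 < r) (hrℓ : r ≤ ℓ) :
    ℓ + b / r ≤ r + (ℓ ^ 2 + 4 * b) / (4 * ℓ) := by
  have hdiff : r + (ℓ ^ 2 + 4 * b) / (4 * ℓ) - (ℓ + b / r)
      = (ℓ * (2 * r - ℓ) ^ 2 + (ℓ - r) * -(ℓ ^ 2 + 4 * b)) / (4 * ℓ * r) := by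
    field_simp
    ring
  have : 0 ≤ (ℓ * (2 * r - ℓ) ^ 2 + (ℓ - r) * -(ℓ ^ 2 + 4 * b)) / (4 * ℓ * r) :=
    div_nonneg (add_nonneg (by positivity) (mul_nonneg (by linarith) (by linarith)))
      (by positivity)
  linarith

theorem exists_neg_of_le_add_neg [Archimedean K] {r : ℕ → K} {δ : K} (hδ : δ < 0)
    (h : ∀ k, r (k + 1) ≤ r k + δ) : ∃ k, r k < 0 := by
  have hlin : ∀ k : ℕ, r k ≤ r 0 + k * δ := by
    intro k
    induction k with
    | zero => simp
    | succ n ih => push_cast; linarith [h n]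
  obtain ⟨n, hn⟩ := exists_nat_gt (r 0 / -δ)
  refine ⟨n, (hlin n).trans_lt ?_⟩
  rw [div_lt_iff₀ (neg_pos.mpr hδ)] at hn
  linarith

theorem pos_and_discrim_nonneg_of_pos [Archimedean K] {ℓ b : K} {s : ℕ → K}
    (hs0 : s 0 = 0) (hs1 : s 1 = 1) (hrec : ∀ k, s (k + 2) = ℓ * s (k + 1) + b * s k)
    (hpos : ∀ k, 0 < s (k + 1)) : 0 < ℓ ∧ 0 ≤ ℓ ^ 2 + 4 * b := by
  have hℓ : 0 < ℓ := by simpa [hrec 0, hs0, hs1] using hpos 1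
  refine ⟨hℓ, ?_⟩
  by_contra! hD
  have hb : b < 0 := by nlinarith
  have hnonneg : ∀ k, 0 ≤ s k
    | 0 => hs0.ge
    | k + 1 => (hpos k).le
  set r : ℕ → K := fun k ↦ s (k + 2) / s (k + 1) with hr
  have hr_pos : ∀ k, 0 < r k := fun k ↦ div_pos (hpos (k + 1)) (hpos k)
  have hr_le : ∀ k, r k ≤ ℓ := fun k ↦ by
    rw [hr, div_le_iff₀ (hpos k), hrec k]
    nlinarith [hnonneg k]
  have hr_succ : ∀ k, r (k + 1) = ℓ + b / r k := fun k ↦ by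
    simp only [hr, hrec (k + 1)]
    field_simp [(hpos k).ne', (hpos (k + 1)).ne']
  obtain ⟨k, hk⟩ := exists_neg_of_le_add_neg (div_neg_of_neg_of_pos hD (by positivity))
    fun k ↦ (hr_succ k).trans_le (add_div_le_add_discrim_div hℓ hD (hr_pos k) (hr_le k))
  exact (hr_pos k).not_gt hk

end OrderedField

theorem stmt8_general (ℓ b : ℤ) (s : ℕ → ℤ)
    (hs0 : s 0 = 0) (hs1 : s 1 = 1)
    (hrec : ∀ j, 2 ≤ j → s j = ℓ * s (j - 1) + b * s (j - 2)) :
    (∀ j, 1 ≤ j → 0 < s j) ↔ (0 < ℓ ∧ 0 ≤ ℓ ^ 2 + 4 * b) := by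
  have hrec' (k : ℕ) : s (k + 2) = ℓ * s (k + 1) + b * s k := hrec (k + 2) (by omega)
  have hpos_iff : (∀ j, 1 ≤ j → 0 < s j) ↔ ∀ k, 0 < s (k + 1) :=
    ⟨fun h k ↦ h (k + 1) k.succ_pos, fun h j hj ↦ by simpa [Nat.sub_add_cancel hj] using h (j - 1)⟩
  rw [hpos_iff]
  refine ⟨fun hpos ↦ ?_, fun ⟨hℓ, hD⟩ ↦ pos_of_discrim_nonneg hℓ hD hs0 hs1 hrec'⟩
  have hℚ := pos_and_discrim_nonneg_of_pos (ℓ := (ℓ : ℚ)) (b := (b : ℚ))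
    (s := fun k ↦ (s k : ℚ)) (by simp [hs0]) (by simp [hs1])
    (fun k ↦ by rw [hrec' k]; push_cast; ring) (fun k ↦ by exact_mod_cast hpos k)
  exact_mod_cast hℚ

/-- For nonzero integers `ℓ, b` and `s` defined by `s₀ = 0`, `s₁ = 1`,
`sⱼ = ℓ s_{j-1} + b s_{j-2}` for `j ≥ 2`: `sⱼ > 0` for all `j ≥ 1` iff `ℓ > 0` and
`ℓ² + 4b ≥ 0`. -/
theorem stmt8 (ℓ b : ℤ) (hℓ : ℓ ≠ 0) (hb : b ≠ 0) (s : ℕ → ℤ)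
    (hs0 : s 0 = 0) (hs1 : s 1 = 1)
    (hrec : ∀ j, 2 ≤ j → s j = ℓ * s (j - 1) + b * s (j - 2)) :
    (∀ j, 1 ≤ j → 0 < s j) ↔ (0 < ℓ ∧ 0 ≤ ℓ ^ 2 + 4 * b) :=
  stmt8_general ℓ b s hs0 hs1 hrec
end

section
/- Let \ell and b be nonzero integers and define the sequence s by s_0 = 0, s_1 = 1, and s_j = \ell s_{j-1} + b s_{j-2} for j \ge 2. Set r = \gcd(\ell, b), t = \gcd(\ell^2/r, b/r), and \sigma = r/t. Then for every n \ge 1, the integer s_n is divisible by t^{n-1} \sigma^{\lfloor n/2 \rfloor}. -/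
/-!
For a recurrence `s (n + 2) = ℓ s (n + 1) + b s n` with `p q ∣ ℓ` and `p² q ∣ b`, each summand carries
one more factor `p` than the term it comes from, and a factor `q` is gained every two steps, so
`p^(n-1) q^⌊n/2⌋ ∣ s n`. Here `p = t`, `q = σ`: indeed `t ∣ r`, because with `ℓ = r ℓ'`, `b = r b'` and
`ℓ'`, `b'` coprime, `t` divides both `b'` and `ℓ² / r = r ℓ'²`, hence is coprime to `ℓ'²`. Then
`t σ = r ∣ ℓ` and `t² σ = t r ∣ b`.
-/

theorem pow_mul_pow_half_dvd_of_recurrence {R : Type*} [CommSemiring R] {p q ℓ b : R}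
    (hℓ : p * q ∣ ℓ) (hb : p ^ 2 * q ∣ b) {s : ℕ → R}
    (hrec : ∀ n, s (n + 2) = ℓ * s (n + 1) + b * s n) :
    ∀ n, p ^ (n - 1) * q ^ (n / 2) ∣ s n := by
  refine Nat.twoStepInduction (by simp) (by simp) fun n ih₀ ih₁ => ?_
  rw [hrec]
  refine dvd_add ?_ ?_
  · calc p ^ (n + 2 - 1) * q ^ ((n + 2) / 2)
        ∣ p ^ (n + 1) * q ^ ((n + 1) / 2 + 1) :=
          mul_dvd_mul (pow_dvd_pow _ (by omega)) (pow_dvd_pow _ (by omega))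
      _ = p * q * (p ^ (n + 1 - 1) * q ^ ((n + 1) / 2)) := by rw [Nat.add_sub_cancel]; ring
      _ ∣ ℓ * s (n + 1) := mul_dvd_mul hℓ ih₁
  · calc p ^ (n + 2 - 1) * q ^ ((n + 2) / 2)
        ∣ p ^ (n - 1 + 2) * q ^ (n / 2 + 1) :=
          mul_dvd_mul (pow_dvd_pow _ (by omega)) (pow_dvd_pow _ (by omega))
      _ = p ^ 2 * q * (p ^ (n - 1) * q ^ (n / 2)) := by ring
      _ ∣ b * s n := mul_dvd_mul hb ih₀

theorem Int.gcd_sq_div_gcd_dvd_gcd (ℓ b : ℤ) :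
    (Int.gcd (ℓ ^ 2 / Int.gcd ℓ b) (b / Int.gcd ℓ b) : ℤ) ∣ Int.gcd ℓ b := by
  rcases Nat.eq_zero_or_pos (Int.gcd ℓ b) with h0 | hpos
  · simp [h0]
  set g : ℤ := (Int.gcd ℓ b : ℤ)
  have hg : g ≠ 0 := by positivity
  obtain ⟨ℓ', hℓ'⟩ : g ∣ ℓ := Int.gcd_dvd_left ℓ b
  obtain ⟨b', hb'⟩ : g ∣ b := Int.gcd_dvd_right ℓ b
  have hcop : IsCoprime ℓ' b' := by
    rw [Int.isCoprime_iff_gcd_eq_one, ← Int.mul_ediv_cancel_left ℓ' hg,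
      ← Int.mul_ediv_cancel_left b' hg, ← hℓ', ← hb']
    exact Int.gcd_div_gcd_div_gcd hpos
  have hℓ_sq : ℓ ^ 2 / g = g * ℓ' ^ 2 := by
    rw [hℓ', show (g * ℓ') ^ 2 = g * (g * ℓ' ^ 2) by ring, Int.mul_ediv_cancel_left _ hg]
  rw [hℓ_sq, hb', Int.mul_ediv_cancel_left _ hg]
  have hb'_dvd : (Int.gcd (g * ℓ' ^ 2) b' : ℤ) ∣ b' := Int.gcd_dvd_right _ _
  exact (hcop.pow_left.symm.of_isCoprime_of_dvd_left hb'_dvd).dvd_of_dvd_mul_right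
    (Int.gcd_dvd_left _ _)

theorem stmt9_general (ℓ b : ℤ) (s : ℕ → ℤ)
    (hrec : ∀ j, 2 ≤ j → s j = ℓ * s (j - 1) + b * s (j - 2))
    (r t σ : ℤ) (hr : r = Int.gcd ℓ b) (ht : t = Int.gcd (ℓ ^ 2 / r) (b / r))
    (hσ : σ = r / t) :
    ∀ n, 1 ≤ n → t ^ (n - 1) * σ ^ (n / 2) ∣ s n := by
  have htr : t ∣ r := by
    subst hr ht
    exact Int.gcd_sq_div_gcd_dvd_gcd ℓ b
  have hr_eq : r = t * σ := by rw [hσ, Int.mul_ediv_cancel' htr]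
  have hrℓ : r ∣ ℓ := hr ▸ Int.gcd_dvd_left ℓ b
  have hrb : r ∣ b := hr ▸ Int.gcd_dvd_right ℓ b
  have htb : t ∣ b / r := ht ▸ Int.gcd_dvd_right _ _
  have hℓ : t * σ ∣ ℓ := hr_eq ▸ hrℓ
  have hb : t ^ 2 * σ ∣ b := by
    rw [← Int.mul_ediv_cancel' hrb, pow_two, mul_assoc, ← hr_eq, mul_comm t r]
    exact mul_dvd_mul_left r htb
  exact fun n _ => pow_mul_pow_half_dvd_of_recurrence hℓ hb
    (fun n => hrec (n + 2) (by omega)) n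

/-- For nonzero integers `ℓ, b` and `s` defined by `s₀ = 0`, `s₁ = 1`,
`sⱼ = ℓ s_{j-1} + b s_{j-2}`, with `r = gcd(ℓ, b)`, `t = gcd(ℓ²/r, b/r)`, `σ = r/t`:
for every `n ≥ 1`, `t^(n-1) σ^⌊n/2⌋` divides `sₙ`. -/
theorem stmt9 (ℓ b : ℤ) (hℓ : ℓ ≠ 0) (hb : b ≠ 0) (s : ℕ → ℤ)
    (hs0 : s 0 = 0) (hs1 : s 1 = 1)
    (hrec : ∀ j, 2 ≤ j → s j = ℓ * s (j - 1) + b * s (j - 2))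
    (r t σ : ℤ) (hr : r = Int.gcd ℓ b) (ht : t = Int.gcd (ℓ ^ 2 / r) (b / r))
    (hσ : σ = r / t) :
    ∀ n, 1 ≤ n → t ^ (n - 1) * σ ^ (n / 2) ∣ s n :=
  stmt9_general ℓ b s hrec r t σ hr ht hσ
end

section
/- Let \ell > 0 and b \ne 0 be integers satisfying \ell^2 + 4b \ge 0, and define the sequence s by s_0 = 0, s_1 = 1, s_j = \ell s_{j-1} + b s_{j-2} for j \ge 2. If \gcd(\ell, b) = \gcd(\ell^2, b) = r, then for every n \ge 1, \gcd(s_{n+1}, s_n) = r^{\lfloor n/2 \rfloor}. -/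
/-!
Write `r = gcd(ℓ, b)`, `ℓ = r ℓ₀` and `b = r c`. Pulling out `r^⌊n/2⌋` turns `s` into a sequence
`v` with `v₀ = 0`, `v₁ = 1` and `v_{n+2} = p_n v_{n+1} + c v_n`, where `p_n` is `ℓ₀` for even `n`
and `ℓ` for odd `n`. The hypothesis `gcd(ℓ², b) = r` says exactly that `c` is coprime to `ℓ`,
hence to every `p_n`; this makes consecutive terms of `v` coprime, and the odd-indexed terms of
`v` coprime to `r`, because they are congruent to powers of `c` modulo `r`.
-/

def lucasSeq (p : ℕ → ℤ) (q : ℤ) : ℕ → ℤ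
  | 0 => 0
  | 1 => 1
  | n + 2 => p n * lucasSeq p q (n + 1) + q * lucasSeq p q n

namespace lucasSeq

variable {p : ℕ → ℤ} {q : ℤ}

theorem isCoprime_succ_right (hp : ∀ n, IsCoprime (p n) q) (n : ℕ) :
    IsCoprime (lucasSeq p q (n + 1)) q := by
  induction n with
  | zero => exact isCoprime_one_left
  | succ n ih => exact ((hp n).mul_left ih).add_mul_left_left _

theorem isCoprime_succ (hp : ∀ n, IsCoprime (p n) q) (n : ℕ) :
    IsCoprime (lucasSeq p q (n + 1)) (lucasSeq p q n) := by
  induction n with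
  | zero => exact isCoprime_one_left
  | succ n ih =>
    have h : IsCoprime (q * lucasSeq p q n) (lucasSeq p q (n + 1)) :=
      (isCoprime_succ_right hp n).symm.mul_left ih.symm
    simpa only [lucasSeq, add_comm] using h.add_mul_right_left (p n)

theorem isCoprime_two_mul_add_one {d : ℤ} (hq : IsCoprime q d) (hd : ∀ n, Odd n → d ∣ p n)
    (k : ℕ) : IsCoprime (lucasSeq p q (2 * k + 1)) d := by
  induction k with
  | zero => exact isCoprime_one_left
  | succ k ih =>
    obtain ⟨e, he⟩ := hd (2 * k + 1) (odd_two_mul_add_one k)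
    have hx : lucasSeq p q (2 * (k + 1) + 1) =
        q * lucasSeq p q (2 * k + 1) + d * (e * lucasSeq p q (2 * k + 2)) := by
      rw [show 2 * (k + 1) + 1 = 2 * k + 1 + 2 by ring, lucasSeq, he]
      ring
    rw [hx]
    exact (hq.mul_left ih).add_mul_left_left _

end lucasSeq

theorem eq_pow_mul_lucasSeq {r a c : ℤ} {s : ℕ → ℤ} (hs0 : s 0 = 0) (hs1 : s 1 = 1)
    (hrec : ∀ n, s (n + 2) = r * a * s (n + 1) + r * c * s n) (n : ℕ) :
    s n = r ^ (n / 2) * lucasSeq (fun n => if Even n then a else r * a) c n := by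
  induction n using Nat.strong_induction_on with
  | _ n ih =>
    match n, ih with
    | 0, _ => simp [hs0, lucasSeq]
    | 1, _ => simp [hs1, lucasSeq]
    | n + 2, ih =>
      rw [hrec, ih n (by omega), ih (n + 1) (by omega), lucasSeq]
      obtain ⟨k, rfl | rfl⟩ := Nat.even_or_odd' n
      · simp only [show (2 * k + 2) / 2 = k + 1 by omega, show (2 * k + 1) / 2 = k by omega,
          show 2 * k / 2 = k by omega, even_two_mul, if_true]
        ring
      · simp only [show (2 * k + 1 + 2) / 2 = k + 1 by omega,
          show (2 * k + 1 + 1) / 2 = k + 1 by omega, show (2 * k + 1) / 2 = k by omega,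
          Nat.not_even_two_mul_add_one, if_false]
        ring

theorem isCoprime_of_gcd_sq_eq_gcd {a b c : ℤ} (hb : b ≠ 0)
    (h : Int.gcd (a ^ 2) b = Int.gcd a b) (hc : b = Int.gcd a b * c) : IsCoprime a c := by
  set g := Int.gcd a b
  obtain ⟨a₀, ha⟩ : (g : ℤ) ∣ a := Int.gcd_dvd_left a b
  have hsq : a ^ 2 = g * (a * a₀) := by rw [sq]; nth_rw 2 [ha]; ring
  rw [hsq, hc, Int.gcd_mul_left, Int.natAbs_natCast,
    Nat.mul_eq_left (Int.gcd_pos_of_ne_zero_right a hb).ne'] at h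
  exact (Int.isCoprime_iff_gcd_eq_one.mpr h).of_mul_left_left

theorem gcd_succ_eq_pow_of_eq_pow_mul {r : ℕ} {s v : ℕ → ℤ} (hs : ∀ n, s n = r ^ (n / 2) * v n)
    (hv : ∀ n, IsCoprime (v (n + 1)) (v n)) (hr : ∀ k, IsCoprime (r : ℤ) (v (2 * k + 1)))
    (n : ℕ) : Int.gcd (s (n + 1)) (s n) = r ^ (n / 2) := by
  rcases Nat.even_or_odd' n with ⟨k, rfl | rfl⟩
  · rw [hs, hs, show (2 * k + 1) / 2 = k by omega, show 2 * k / 2 = k by omega,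
      Int.gcd_mul_left, Int.isCoprime_iff_gcd_eq_one.mp (hv _)]
    simp [Int.natAbs_pow]
  · have hcop : IsCoprime (r * v (2 * k + 2)) (v (2 * k + 1)) := (hr k).mul_left (hv _)
    rw [hs, hs, show (2 * k + 1 + 1) / 2 = k + 1 by omega, show (2 * k + 1) / 2 = k by omega,
      pow_succ, mul_assoc, Int.gcd_mul_left, Int.isCoprime_iff_gcd_eq_one.mp hcop]
    simp [Int.natAbs_pow]

theorem stmt10_general (ℓ b : ℤ) (hb : b ≠ 0)
    (s : ℕ → ℤ) (hs0 : s 0 = 0) (hs1 : s 1 = 1)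
    (hrec : ∀ j, 2 ≤ j → s j = ℓ * s (j - 1) + b * s (j - 2))
    (r : ℕ) (hr : Int.gcd ℓ b = r) (hr2 : Int.gcd (ℓ ^ 2) b = r) :
    ∀ n, 1 ≤ n → Int.gcd (s (n + 1)) (s n) = r ^ (n / 2) := by
  obtain ⟨ℓ₀, hℓ⟩ : (r : ℤ) ∣ ℓ := hr ▸ Int.gcd_dvd_left ℓ b
  obtain ⟨c, hbc⟩ : (r : ℤ) ∣ b := hr ▸ Int.gcd_dvd_right ℓ b
  have hℓc : IsCoprime ℓ c := isCoprime_of_gcd_sq_eq_gcd hb (hr2.trans hr.symm) (hr ▸ hbc)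
  subst hℓ hbc
  have hs (n : ℕ) : s n = r ^ (n / 2) * lucasSeq (fun n => if Even n then ℓ₀ else r * ℓ₀) c n :=
    eq_pow_mul_lucasSeq hs0 hs1 (fun n => by simpa using hrec (n + 2) (by omega)) n
  have hp (n : ℕ) : IsCoprime (if Even n then ℓ₀ else r * ℓ₀) c := by
    split_ifs
    · exact hℓc.of_mul_left_right
    · exact hℓc
  have hrp (n : ℕ) (hn : Odd n) : (r : ℤ) ∣ if Even n then ℓ₀ else r * ℓ₀ := by
    rw [if_neg (Nat.not_even_iff_odd.mpr hn)]
    exact dvd_mul_right _ _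
  exact fun n _ => gcd_succ_eq_pow_of_eq_pow_mul hs (lucasSeq.isCoprime_succ hp)
    (fun k => (lucasSeq.isCoprime_two_mul_add_one hℓc.of_mul_left_left.symm hrp k).symm) n

/-- For integers `ℓ > 0`, `b ≠ 0` with `ℓ² + 4b ≥ 0` and `s`
defined by `s₀ = 0`, `s₁ = 1`, `sⱼ = ℓ s_{j-1} + b s_{j-2}`: if
`gcd(ℓ, b) = gcd(ℓ², b) = r`, then `gcd(s_{n+1}, sₙ) = r^⌊n/2⌋` for every `n ≥ 1`. -/
theorem stmt10 (ℓ b : ℤ) (hℓ : 0 < ℓ) (hb : b ≠ 0) (hD : 0 ≤ ℓ ^ 2 + 4 * b)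
    (s : ℕ → ℤ) (hs0 : s 0 = 0) (hs1 : s 1 = 1)
    (hrec : ∀ j, 2 ≤ j → s j = ℓ * s (j - 1) + b * s (j - 2))
    (r : ℕ) (hr : Int.gcd ℓ b = r) (hr2 : Int.gcd (ℓ ^ 2) b = r) :
    ∀ n, 1 ≤ n → Int.gcd (s (n + 1)) (s n) = r ^ (n / 2) :=
  stmt10_general ℓ b hb s hs0 hs1 hrec r hr hr2
end

section
/- Let \ell > 0 and b \ne 0 be integers satisfying \ell^2 + 4b \ge 0, and define the sequence s by s_0 = 0, s_1 = 1, s_j = \ell s_{j-1} + b s_{j-2} for j \ge 2. Set r = \gcd(\ell, b), t = \gcd(\ell^2/r, b/r), and \sigma = r/t. Define the sequence f by f_0 = 0, f_1 = 1, and f_n = (\ell/t) f_{n-1} + (b/t^2) f_{n-2} for n \ge 2. Then: (i) f is an integer sequence; (ii) s_n = t^{n-1} f_n for all n \ge 1; and (iii) \gcd(f_{n+1}, f_n) = \sigma^{\lfloor n/2 \rfloor} for all n \ge 1. -/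
/-!
Write `ℓ = t σ γ` and `b = t² σ β` with `gcd(σ γ², β) = 1`. Dividing `s` by powers of `t` gives
the integer sequence `f` with `f_{n+2} = σ γ f_{n+1} + σ β f_n`, and `f_n = σ^⌊n/2⌋ h_n` where
`h = reducedSeq σ γ β` solves `h_{n+2} = σ^(n mod 2) γ h_{n+1} + β h_n`: the factor `σ` of the
coefficient of `f_{n+1}` is absorbed into the power of `σ` in front of `h` at every other step.
Since `β` is coprime to the coefficients of `h`, consecutive terms of `h` are coprime, and `σ` is
coprime to the odd-indexed terms; this gives `gcd(f_{n+1}, f_n) = σ^⌊n/2⌋`.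
-/

theorem seq_eq_of_rec {R : Type*} [Semiring R] {A B : R} {u v : ℕ → R}
    (hu : ∀ n, u (n + 2) = A * u (n + 1) + B * u n)
    (hv : ∀ n, v (n + 2) = A * v (n + 1) + B * v n) (h0 : u 0 = v 0) (h1 : u 1 = v 1) :
    u = v := by
  funext n
  induction n using Nat.twoStepInduction with
  | zero => exact h0
  | one => exact h1
  | more n ihn ihn1 => rw [hu, hv, ihn, ihn1]

theorem add_one_eq_pow_mul_of_rec_div {K : Type*} [Field K] {A B t : K} (ht : t ≠ 0)
    {s f : ℕ → K} (hs : ∀ n, s (n + 2) = A * s (n + 1) + B * s n)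
    (hf : ∀ n, f (n + 2) = A / t * f (n + 1) + B / t ^ 2 * f n)
    (hs0 : s 0 = 0) (hs1 : s 1 = 1) (hf0 : f 0 = 0) (hf1 : f 1 = 1) (n : ℕ) :
    s (n + 1) = t ^ n * f (n + 1) := by
  have hscaled : (fun n ↦ t * s n) = fun n ↦ t ^ n * f n := by
    refine seq_eq_of_rec (A := A) (B := B) (fun n ↦ ?_) (fun n ↦ ?_) ?_ ?_
    · rw [hs]; ring
    · rw [hf]; field_simp; ring
    · simp [hs0, hf0]
    · simp [hs1, hf1]
  have := congrFun hscaled (n + 1)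
  rw [pow_succ'] at this
  exact mul_left_cancel₀ ht (by rw [this]; ring)

section CoprimeRec

variable {R : Type*} [CommRing R] {u a : ℕ → R} {β : R}

theorem isCoprime_of_rec (hu1 : u 1 = 1)
    (hrec : ∀ n, u (n + 2) = a n * u (n + 1) + β * u n) (ha : ∀ n, IsCoprime β (a n)) (n : ℕ) :
    IsCoprime β (u (n + 1)) := by
  induction n with
  | zero => simpa [hu1] using isCoprime_one_right
  | succ n ih =>
    rw [hrec, IsCoprime.add_mul_left_right_iff]
    exact (ha n).mul_right ih

theorem isCoprime_succ_of_rec (hu1 : u 1 = 1)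
    (hrec : ∀ n, u (n + 2) = a n * u (n + 1) + β * u n) (ha : ∀ n, IsCoprime β (a n)) (n : ℕ) :
    IsCoprime (u (n + 1)) (u n) := by
  induction n with
  | zero => simpa [hu1] using isCoprime_one_left
  | succ n ih =>
    rw [hrec, add_comm, IsCoprime.add_mul_right_left_iff]
    exact (isCoprime_of_rec hu1 hrec ha n).mul_left ih.symm

theorem isCoprime_odd_of_rec {σ : R} (hu1 : u 1 = 1)
    (hrec : ∀ n, u (n + 2) = a n * u (n + 1) + β * u n) (hσβ : IsCoprime σ β)
    (ha : ∀ k, σ ∣ a (2 * k + 1)) (k : ℕ) : IsCoprime σ (u (2 * k + 1)) := by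
  induction k with
  | zero => simpa [hu1] using isCoprime_one_right
  | succ k ih =>
    obtain ⟨c, hc⟩ := ha k
    rw [show 2 * (k + 1) + 1 = 2 * k + 1 + 2 by ring, hrec, hc, mul_assoc, add_comm,
      IsCoprime.add_mul_left_right_iff]
    exact hσβ.mul_right ih

end CoprimeRec

def reducedSeq {R : Type*} [CommSemiring R] (σ γ β : R) : ℕ → R
  | 0 => 0
  | 1 => 1
  | n + 2 => σ ^ (n % 2) * γ * reducedSeq σ γ β (n + 1) + β * reducedSeq σ γ β n

section ReducedSeq

variable {R : Type*} [CommSemiring R] (σ γ β : R)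

@[simp] theorem reducedSeq_zero : reducedSeq σ γ β 0 = 0 := rfl

@[simp] theorem reducedSeq_one : reducedSeq σ γ β 1 = 1 := rfl

theorem reducedSeq_add_two (n : ℕ) :
    reducedSeq σ γ β (n + 2) =
      σ ^ (n % 2) * γ * reducedSeq σ γ β (n + 1) + β * reducedSeq σ γ β n := rfl

def scaledSeq (n : ℕ) : R := σ ^ (n / 2) * reducedSeq σ γ β n

@[simp] theorem scaledSeq_zero : scaledSeq σ γ β 0 = 0 := by simp [scaledSeq]

@[simp] theorem scaledSeq_one : scaledSeq σ γ β 1 = 1 := by simp [scaledSeq]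

theorem scaledSeq_add_two (n : ℕ) :
    scaledSeq σ γ β (n + 2) = σ * γ * scaledSeq σ γ β (n + 1) + σ * β * scaledSeq σ γ β n := by
  have h₁ : σ ^ ((n + 2) / 2) * σ ^ (n % 2) = σ * σ ^ ((n + 1) / 2) := by
    rw [← pow_add, ← pow_succ']; congr 1; omega
  have h₂ : σ ^ ((n + 2) / 2) = σ * σ ^ (n / 2) := by
    rw [← pow_succ']; congr 1; omega
  rw [scaledSeq, scaledSeq, scaledSeq, reducedSeq_add_two, mul_add, ← mul_assoc, ← mul_assoc,
    h₁, h₂]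
  ring

end ReducedSeq

theorem gcd_scaledSeq_succ {σ γ β : ℤ} (hσ : 0 ≤ σ) (hσβ : IsCoprime σ β)
    (hγβ : IsCoprime γ β) (n : ℕ) :
    (Int.gcd (scaledSeq σ γ β (n + 1)) (scaledSeq σ γ β n) : ℤ) = σ ^ (n / 2) := by
  have hrec := reducedSeq_add_two σ γ β
  have hcoeff : ∀ n, IsCoprime β (σ ^ (n % 2) * γ) := fun n ↦
    hσβ.symm.pow_right.mul_right hγβ.symm
  have hodd : ∀ k, σ ∣ σ ^ ((2 * k + 1) % 2) * γ := fun k ↦ by simp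
  have hcop : IsCoprime (σ ^ (n % 2) * reducedSeq σ γ β (n + 1)) (reducedSeq σ γ β n) := by
    refine IsCoprime.mul_left ?_ (isCoprime_succ_of_rec (reducedSeq_one σ γ β) hrec hcoeff n)
    rcases Nat.even_or_odd' n with ⟨k, rfl | rfl⟩
    · rw [Nat.mul_mod_right, pow_zero]
      exact isCoprime_one_left
    · simpa using isCoprime_odd_of_rec (reducedSeq_one σ γ β) hrec hσβ hodd k
  rw [scaledSeq, scaledSeq, show (n + 1) / 2 = n / 2 + n % 2 by omega, pow_add, mul_assoc,
    Int.gcd_mul_left, Int.isCoprime_iff_gcd_eq_one.mp hcop, mul_one,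
    Int.natAbs_of_nonneg (pow_nonneg hσ _)]

theorem exists_eq_mul_of_gcd {ℓ b r t σ : ℤ} (hb : b ≠ 0) (hr : r = Int.gcd ℓ b)
    (ht : t = Int.gcd (ℓ ^ 2 / r) (b / r)) (hσ : σ = r / t) :
    0 < t ∧ 0 < σ ∧ ∃ γ β : ℤ, ℓ = t * (σ * γ) ∧ b = t ^ 2 * (σ * β) ∧ IsCoprime (σ * γ ^ 2) β := by
  have hr0 : 0 < r := hr ▸ Int.natCast_pos.mpr (Int.gcd_pos_of_ne_zero_right ℓ hb)
  obtain ⟨γ, hγ⟩ : r ∣ ℓ := hr ▸ Int.gcd_dvd_left _ _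
  obtain ⟨b', hb'⟩ : r ∣ b := hr ▸ Int.gcd_dvd_right _ _
  have hb'0 : b' ≠ 0 := by rintro rfl; exact hb (by rw [hb', mul_zero])
  have hℓ2 : ℓ ^ 2 / r = r * γ ^ 2 := by
    rw [hγ, show (r * γ) ^ 2 = r * (r * γ ^ 2) by ring, Int.mul_ediv_cancel_left _ hr0.ne']
  rw [hb', Int.mul_ediv_cancel_left _ hr0.ne', hℓ2] at ht
  have ht0 : 0 < t := ht ▸ Int.natCast_pos.mpr (Int.gcd_pos_of_ne_zero_right _ hb'0)
  have hγb' : IsCoprime γ b' := by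
    have h := Int.gcd_div_gcd_div_gcd (Int.gcd_pos_of_ne_zero_right ℓ hb)
    rwa [← hr, hγ, hb', Int.mul_ediv_cancel_left _ hr0.ne', Int.mul_ediv_cancel_left _ hr0.ne',
      ← Int.isCoprime_iff_gcd_eq_one] at h
  obtain ⟨β, hβ⟩ : t ∣ b' := ht ▸ Int.gcd_dvd_right _ _
  have htr : t ∣ r := by
    have htγ : IsCoprime t (γ ^ 2) := (hγb'.of_isCoprime_of_dvd_right ⟨β, hβ⟩).symm.pow_right
    exact htγ.dvd_of_dvd_mul_right (ht ▸ Int.gcd_dvd_left _ _)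
  obtain ⟨σ', hσ'⟩ := htr
  obtain rfl : σ = σ' := by rw [hσ, hσ', Int.mul_ediv_cancel_left _ ht0.ne']
  refine ⟨ht0, pos_of_mul_pos_right (hσ' ▸ hr0) ht0.le, γ, β, ?_, ?_, ?_⟩
  · rw [hγ, hσ']; ring
  · rw [hb', hβ, hσ']; ring
  · have h := Int.gcd_div_gcd_div_gcd (Int.gcd_pos_of_ne_zero_right (r * γ ^ 2) hb'0)
    rwa [← ht, hσ', hβ, show t * σ * γ ^ 2 = t * (σ * γ ^ 2) by ring,
      Int.mul_ediv_cancel_left _ ht0.ne', Int.mul_ediv_cancel_left _ ht0.ne',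
      ← Int.isCoprime_iff_gcd_eq_one] at h

theorem stmt11_general (ℓ b : ℤ) (hb : b ≠ 0)
    (s : ℕ → ℤ) (hs0 : s 0 = 0) (hs1 : s 1 = 1)
    (hrec : ∀ j, 2 ≤ j → s j = ℓ * s (j - 1) + b * s (j - 2))
    (r t σ : ℤ) (hr : r = Int.gcd ℓ b) (ht : t = Int.gcd (ℓ ^ 2 / r) (b / r))
    (hσ : σ = r / t)
    (f : ℕ → ℚ) (hf0 : f 0 = 0) (hf1 : f 1 = 1)
    (hfrec : ∀ j, 2 ≤ j →
      f j = ((ℓ : ℚ) / (t : ℚ)) * f (j - 1) + ((b : ℚ) / (t : ℚ) ^ 2) * f (j - 2)) :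
    (∀ n, ∃ m : ℤ, f n = (m : ℚ)) ∧
    (∀ n, 1 ≤ n → (s n : ℚ) = (t : ℚ) ^ (n - 1) * f n) ∧
    (∀ n, 1 ≤ n → ∀ a c : ℤ, f n = (a : ℚ) → f (n + 1) = (c : ℚ) →
      (Int.gcd c a : ℤ) = σ ^ (n / 2)) := by
  obtain ⟨ht0, hσ0, γ, β, hℓ, hbσβ, hcop⟩ := exists_eq_mul_of_gcd hb hr ht hσ
  have hs (n : ℕ) : (s (n + 2) : ℚ) = ℓ * s (n + 1) + b * s n := by
    simpa using congrArg ((↑) : ℤ → ℚ) (hrec (n + 2) (by omega))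
  have hf (n : ℕ) : f (n + 2) = ℓ / t * f (n + 1) + b / t ^ 2 * f n := by
    simpa using hfrec (n + 2) (by omega)
  have hfg : f = fun n ↦ ((scaledSeq σ γ β n : ℤ) : ℚ) := by
    refine seq_eq_of_rec (A := ((σ * γ : ℤ) : ℚ)) (B := ((σ * β : ℤ) : ℚ))
      (fun n ↦ ?_) (fun n ↦ ?_) ?_ ?_
    · have ht' : (t : ℚ) ≠ 0 := by exact_mod_cast ht0.ne'
      rw [hf, hℓ, hbσβ]; push_cast; field_simp
    · exact_mod_cast scaledSeq_add_two σ γ β n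
    · simp [hf0]
    · simp [hf1]
  refine ⟨fun n ↦ ⟨scaledSeq σ γ β n, congrFun hfg n⟩, fun n hn ↦ ?_, fun n _ a c ha hc ↦ ?_⟩
  · obtain ⟨m, rfl⟩ := Nat.exists_eq_add_of_le' hn
    exact add_one_eq_pow_mul_of_rec_div (s := fun n ↦ (s n : ℚ)) (by exact_mod_cast ht0.ne')
      hs hf (by simp [hs0]) (by simp [hs1]) hf0 hf1 m
  · obtain rfl : a = scaledSeq σ γ β n := by exact_mod_cast ha.symm.trans (congrFun hfg n)
    obtain rfl : c = scaledSeq σ γ β (n + 1) := by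
      exact_mod_cast hc.symm.trans (congrFun hfg (n + 1))
    exact gcd_scaledSeq_succ hσ0.le hcop.of_mul_left_left
      ((IsCoprime.pow_left_iff two_pos).mp hcop.of_mul_left_right) n

/-- With `ℓ > 0`, `b ≠ 0`, `ℓ² + 4b ≥ 0`, `s` as usual,
`r = gcd(ℓ, b)`, `t = gcd(ℓ²/r, b/r)`, `σ = r/t`, and `f` defined by `f₀ = 0`,
`f₁ = 1`, `fₙ = (ℓ/t) f_{n-1} + (b/t²) f_{n-2}`: (i) `f` is an integer sequence;
(ii) `sₙ = t^(n-1) fₙ` for `n ≥ 1`; (iii) `gcd(f_{n+1}, fₙ) = σ^⌊n/2⌋` for `n ≥ 1`. -/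
theorem stmt11 (ℓ b : ℤ) (hℓ : 0 < ℓ) (hb : b ≠ 0) (hD : 0 ≤ ℓ ^ 2 + 4 * b)
    (s : ℕ → ℤ) (hs0 : s 0 = 0) (hs1 : s 1 = 1)
    (hrec : ∀ j, 2 ≤ j → s j = ℓ * s (j - 1) + b * s (j - 2))
    (r t σ : ℤ) (hr : r = Int.gcd ℓ b) (ht : t = Int.gcd (ℓ ^ 2 / r) (b / r))
    (hσ : σ = r / t)
    (f : ℕ → ℚ) (hf0 : f 0 = 0) (hf1 : f 1 = 1)
    (hfrec : ∀ j, 2 ≤ j →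
      f j = ((ℓ : ℚ) / (t : ℚ)) * f (j - 1) + ((b : ℚ) / (t : ℚ) ^ 2) * f (j - 2)) :
    (∀ n, ∃ m : ℤ, f n = (m : ℚ)) ∧
    (∀ n, 1 ≤ n → (s n : ℚ) = (t : ℚ) ^ (n - 1) * f n) ∧
    (∀ n, 1 ≤ n → ∀ a c : ℤ, f n = (a : ℚ) → f (n + 1) = (c : ℚ) →
      (Int.gcd c a : ℤ) = σ ^ (n / 2)) :=
  stmt11_general ℓ b hb s hs0 hs1 hrec r t σ hr ht hσ f hf0 hf1 hfrec
end

section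
/- Let \ell > 0 and b \ne 0 be integers satisfying \ell^2 + 4b \ge 0, and define the sequence s by s_0 = 0, s_1 = 1, s_j = \ell s_{j-1} + b s_{j-2} for j \ge 2. Suppose \gcd(\ell, b) = \gcd(\ell^2, b). Then: if b > 0, the s-lecture hall cone C_n^{(s)} is not Gorenstein for any n \ge 5; and if b < -1, C_n^{(s)} is not Gorenstein for any n \ge 6. -/
/-!
At a Gorenstein point `λ` of the `s`-lecture hall cone, every facet functional
`s_i λ_{i+1} - s_{i+1} λ_i` takes the least positive value it can take at a lattice point,
namely `gcd (s_i, s_{i+1})`: otherwise subtracting `λ` from a lattice point of the open cone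
that lies closer to that facet would give a point outside the cone. Two neighbouring
facets combine through the recurrence, so `s_{k+1}` divides
`gcd (s_{k+1}, s_{k+2}) + b · gcd (s_k, s_{k+1})`.

Write `D = gcd (ℓ, b)`. If `gcd (ℓ, b) = gcd (ℓ², b)`, then `b / D` is prime to `ℓ`. Cassini's
identity and the `D`-adic shape of the terms then give `gcd (s_3, s_4) = D` and
`gcd (s_4, s_5) = gcd (s_5, s_6) = D²`. So `s_4 ∣ D² + b D`, which is impossible for `b > 0`
because `0 < D² + b D < s_4`, and `s_5 ∣ D² (1 + b)`, which is impossible for `b < -1`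
because `0 < D² (-1 - b) < s_5`.
-/

noncomputable section

open scoped Classical

theorem isCoprime_of_gcd_eq_gcd_sq {ℓ b b₁ : ℤ} (hℓ : ℓ ≠ 0)
    (h : Int.gcd ℓ b = Int.gcd (ℓ ^ 2) b) (hb : b = Int.gcd ℓ b * b₁) : IsCoprime ℓ b₁ := by
  have hD : (Int.gcd ℓ b : ℤ) ≠ 0 := by exact_mod_cast Int.gcd_ne_zero_left hℓ
  have hsq : (Int.gcd ℓ b : ℤ) * Int.gcd ℓ b₁ ∣ ℓ ^ 2 :=
    sq ℓ ▸ mul_dvd_mul (Int.gcd_dvd_left _ _) (Int.gcd_dvd_left _ _)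
  have hdvd : (Int.gcd ℓ b : ℤ) * Int.gcd ℓ b₁ ∣ b :=
    (mul_dvd_mul_left _ (Int.gcd_dvd_right ℓ b₁)).trans (dvd_of_eq hb.symm)
  have hone : (Int.gcd ℓ b₁ : ℤ) ∣ 1 := by
    rw [← mul_dvd_mul_iff_left hD, mul_one]
    simpa only [← h] using Int.dvd_coe_gcd hsq hdvd
  exact Int.isCoprime_iff_gcd_eq_one.2
    (by exact_mod_cast Int.eq_one_of_dvd_one (by positivity) hone)

theorem dvd_pow_of_dvd_pow_mul {R : Type*} [CommSemiring R] {g D X : R} {j k : ℕ}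
    (hX : IsCoprime D X) (hk : g ∣ D ^ k) (hj : g ∣ D ^ j * X) : g ∣ D ^ j :=
  (hX.pow_left.of_isCoprime_of_dvd_left hk).dvd_of_dvd_mul_right hj

theorem exists_lt_and_mul_sub_mul_eq_gcd (a c N : ℤ) (ha : 0 < a) :
    ∃ u v, N < u ∧ a * v - c * u = Int.gcd a c := by
  set t := |N| + |Int.gcdB a c| + 1
  refine ⟨a * t - Int.gcdB a c, Int.gcdA a c + c * t, ?_, ?_⟩
  · nlinarith [le_abs_self N, le_abs_self (Int.gcdB a c), abs_nonneg N,
      abs_nonneg (Int.gcdB a c)]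
  · rw [Int.gcd_eq_gcd_ab]; ring

section LucasSequence

variable {ℓ b : ℤ} {s : ℕ → ℤ}

/-- The ratios `s (j + 2) / s (j + 1)` never drop below `ℓ / 2`, half the sum of the
characteristic roots; this invariant is what `ℓ ^ 2 + 4 * b ≥ 0` buys. -/
theorem lucas_pos (hℓ : 0 < ℓ) (hD : 0 ≤ ℓ ^ 2 + 4 * b) (hs0 : s 0 = 0) (hs1 : s 1 = 1)
    (hrec : ∀ j, s (j + 2) = ℓ * s (j + 1) + b * s j) (j : ℕ) : 0 < s (j + 1) := by
  have key : ∀ j, 0 < s (j + 1) ∧ ℓ * s (j + 1) ≤ 2 * s (j + 2) := by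
    intro j
    induction j with
    | zero => simp only [hrec 0, hs0, hs1]; constructor <;> linarith
    | succ j ih =>
      obtain ⟨hpos, hratio⟩ := ih
      have hpos' : 0 < s (j + 2) := by nlinarith
      refine ⟨hpos', ?_⟩
      rw [hrec (j + 1)]
      nlinarith [mul_nonneg hD hpos.le]
  exact (key j).1

theorem lucas_cassini (hs0 : s 0 = 0) (hs1 : s 1 = 1)
    (hrec : ∀ j, s (j + 2) = ℓ * s (j + 1) + b * s j) (j : ℕ) :
    s (j + 1) ^ 2 - s j * s (j + 2) = (-b) ^ j := by
  induction j with
  | zero => simp [hs0, hs1]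
  | succ j ih =>
    rw [pow_succ (-b), ← ih]
    linear_combination (-s (j + 1)) * hrec (j + 1) + s (j + 2) * hrec j

theorem lucas_isCoprime {b₁ : ℤ} (hs1 : s 1 = 1)
    (hrec : ∀ j, s (j + 2) = ℓ * s (j + 1) + b * s j) (hb : b₁ ∣ b) (hℓ : IsCoprime ℓ b₁)
    (j : ℕ) : IsCoprime (s (j + 1)) b₁ := by
  induction j with
  | zero => simpa [hs1] using isCoprime_one_left
  | succ j ih =>
    obtain ⟨c, rfl⟩ := hb
    rw [hrec j, mul_assoc]
    exact (hℓ.mul_left ih).add_mul_left_left _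

theorem lucas_eq_pow_mul {D ℓ₁ b₁ : ℤ} (hs0 : s 0 = 0) (hs1 : s 1 = 1)
    (hrec : ∀ j, s (j + 2) = ℓ * s (j + 1) + b * s j) (hℓ : ℓ = D * ℓ₁) (hb : b = D * b₁)
    (hcop : IsCoprime D b₁) (j : ℕ) :
    ∃ X Y, IsCoprime D X ∧ s (2 * j + 1) = D ^ j * X ∧ s (2 * j + 2) = D ^ (j + 1) * Y := by
  induction j with
  | zero => exact ⟨1, ℓ₁, isCoprime_one_right, by simp [hs1], by simp [hrec 0, hs0, hs1, hℓ]⟩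
  | succ j ih =>
    obtain ⟨X, Y, hX, hodd, heven⟩ := ih
    have hodd' : s (2 * (j + 1) + 1) = D ^ (j + 1) * (b₁ * X + D * (ℓ₁ * Y)) := by
      rw [show 2 * (j + 1) + 1 = 2 * j + 1 + 2 by ring, hrec, heven, hodd, hℓ, hb]; ring
    refine ⟨_, ℓ₁ * (b₁ * X + D * (ℓ₁ * Y)) + b₁ * Y,
      (hcop.mul_right hX).add_mul_left_right _, hodd', ?_⟩
    rw [show 2 * (j + 1) + 2 = 2 * j + 2 + 2 by ring, hrec,
      show 2 * j + 2 + 1 = 2 * (j + 1) + 1 by ring, hodd', heven, hℓ, hb]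
    ring

/-- By Cassini's identity the gcd divides `b ^ k = D ^ k * b₁ ^ k`, and every term is prime
to `b₁`. -/
theorem lucas_gcd_dvd_pow {D b₁ : ℤ} (hs0 : s 0 = 0) (hs1 : s 1 = 1)
    (hrec : ∀ j, s (j + 2) = ℓ * s (j + 1) + b * s j) (hb : b = D * b₁)
    (hcop : IsCoprime ℓ b₁) (k : ℕ) : (Int.gcd (s (k + 1)) (s (k + 2)) : ℤ) ∣ D ^ k := by
  have hg1 : (Int.gcd (s (k + 1)) (s (k + 2)) : ℤ) ∣ s (k + 1) := Int.gcd_dvd_left _ _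
  have hg2 : (Int.gcd (s (k + 1)) (s (k + 2)) : ℤ) ∣ s (k + 2) := Int.gcd_dvd_right _ _
  have hcas : (Int.gcd (s (k + 1)) (s (k + 2)) : ℤ) ∣ (-D) ^ k * b₁ ^ k := by
    rw [← mul_pow, neg_mul, ← hb, ← lucas_cassini hs0 hs1 hrec k]
    exact dvd_sub (dvd_pow hg1 two_ne_zero) (dvd_mul_of_dvd_right hg2 _)
  have hb₁ : b₁ ∣ b := ⟨D, by rw [hb, mul_comm]⟩
  have hgb : IsCoprime _ (b₁ ^ k) :=
    ((lucas_isCoprime hs1 hrec hb₁ hcop k).of_isCoprime_of_dvd_left hg1).pow_right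
  exact (hgb.dvd_of_dvd_mul_right hcas).trans (pow_dvd_pow_of_dvd (neg_dvd.2 dvd_rfl) k)

theorem lucas_gcd_odd {D ℓ₁ b₁ : ℤ} (hs0 : s 0 = 0) (hs1 : s 1 = 1)
    (hrec : ∀ j, s (j + 2) = ℓ * s (j + 1) + b * s j) (hD : 0 ≤ D) (hℓ : ℓ = D * ℓ₁)
    (hb : b = D * b₁) (hcop : IsCoprime ℓ b₁) (j : ℕ) :
    (Int.gcd (s (2 * j + 1)) (s (2 * j + 2)) : ℤ) = D ^ j := by
  have hDb : IsCoprime D b₁ := hcop.of_isCoprime_of_dvd_left ⟨ℓ₁, hℓ⟩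
  obtain ⟨X, Y, hX, hodd, heven⟩ := lucas_eq_pow_mul hs0 hs1 hrec hℓ hb hDb j
  refine Int.dvd_antisymm (by positivity) (by positivity) ?_ ?_
  · exact dvd_pow_of_dvd_pow_mul hX (lucas_gcd_dvd_pow hs0 hs1 hrec hb hcop (2 * j))
      (hodd ▸ Int.gcd_dvd_left _ _)
  · exact Int.dvd_coe_gcd ⟨X, hodd⟩ ⟨D * Y, by rw [heven, pow_succ, mul_assoc]⟩

theorem lucas_gcd_even {D ℓ₁ b₁ : ℤ} (hs0 : s 0 = 0) (hs1 : s 1 = 1)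
    (hrec : ∀ j, s (j + 2) = ℓ * s (j + 1) + b * s j) (hD : 0 ≤ D) (hℓ : ℓ = D * ℓ₁)
    (hb : b = D * b₁) (hcop : IsCoprime ℓ b₁) (j : ℕ) :
    (Int.gcd (s (2 * j + 2)) (s (2 * j + 3)) : ℤ) = D ^ (j + 1) := by
  have hDb : IsCoprime D b₁ := hcop.of_isCoprime_of_dvd_left ⟨ℓ₁, hℓ⟩
  obtain ⟨-, Y, -, -, heven⟩ := lucas_eq_pow_mul hs0 hs1 hrec hℓ hb hDb j
  obtain ⟨X, -, hX, hodd, -⟩ := lucas_eq_pow_mul hs0 hs1 hrec hℓ hb hDb (j + 1)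
  have hodd' : s (2 * j + 3) = D ^ (j + 1) * X := hodd
  refine Int.dvd_antisymm (by positivity) (by positivity) ?_ ?_
  · exact dvd_pow_of_dvd_pow_mul hX (lucas_gcd_dvd_pow hs0 hs1 hrec hb hcop (2 * j + 1))
      (hodd' ▸ Int.gcd_dvd_right _ _)
  · exact Int.dvd_coe_gcd ⟨Y, heven⟩ ⟨X, hodd'⟩

theorem lucas_four_not_dvd {D : ℤ} (hs0 : s 0 = 0) (hs1 : s 1 = 1)
    (hrec : ∀ j, s (j + 2) = ℓ * s (j + 1) + b * s j) (hb : 0 < b) (hD : 0 < D) (hDℓ : D ≤ ℓ) :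
    ¬ s 4 ∣ D ^ 2 + b * D := by
  have h4 : s 4 = ℓ ^ 3 + 2 * b * ℓ := by simp [hrec, hs0, hs1]; ring
  intro h
  have := Int.le_of_dvd (by positivity) h
  nlinarith [mul_le_mul hDℓ hDℓ hD.le (by omega), mul_le_mul_of_nonneg_left hDℓ hb.le,
    mul_nonneg (sq_nonneg ℓ) (by omega : (0 : ℤ) ≤ ℓ - 1), mul_pos hb hD]

theorem lucas_five_not_dvd {D : ℤ} (hs0 : s 0 = 0) (hs1 : s 1 = 1)
    (hrec : ∀ j, s (j + 2) = ℓ * s (j + 1) + b * s j) (hb : b < -1) (hdisc : 0 ≤ ℓ ^ 2 + 4 * b)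
    (hD : 0 < D) (hDℓ : D ≤ ℓ) : ¬ s 5 ∣ D ^ 2 + b * D ^ 2 := by
  have h5 : s 5 = ℓ ^ 4 + 3 * b * ℓ ^ 2 + b ^ 2 := by simp [hrec, hs0, hs1]; ring
  intro h
  have := Int.le_of_dvd (by nlinarith [pow_pos hD 2]) (dvd_neg.2 h)
  have hD2 : D ^ 2 ≤ ℓ ^ 2 := pow_le_pow_left₀ hD.le hDℓ 2
  nlinarith [mul_nonneg (sq_nonneg ℓ) hdisc, sq_nonneg b,
    mul_le_mul_of_nonneg_left hD2 (by omega : (0 : ℤ) ≤ -1 - b)]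

end LucasSequence

open Filter Topology

section LectureHallCone

variable {n : ℕ} {s : ℕ → ℤ}

def lhConeStrict (n : ℕ) (s : ℕ → ℤ) : Set (Fin n → ℝ) :=
  {x | (∀ p, 0 < x p / s (p + 1)) ∧
    ∀ p q : Fin n, (q : ℕ) = p + 1 → x p / s (p + 1) < x q / s (q + 1)}

theorem isOpen_lhConeStrict : IsOpen (lhConeStrict n s) := by
  have hcont (p : Fin n) : Continuous fun x : Fin n → ℝ => x p / s (p + 1) :=
    (continuous_apply p).div_const _
  refine IsOpen.and ?_ ?_
  · simp only [Set.ofPred_forall]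
    exact isOpen_iInter_of_finite fun p => isOpen_lt continuous_const (hcont p)
  · simp only [Set.ofPred_forall]
    exact isOpen_iInter_of_finite fun p => isOpen_iInter_of_finite fun q =>
      isOpen_iInter_of_finite fun _ => isOpen_lt (hcont p) (hcont q)

theorem lhConeStrict_subset_interior : lhConeStrict n s ⊆ interior (lhCone n s) :=
  interior_maximal (fun _ hx => ⟨fun p hp => by simpa [hp] using (hx.1 p).le,
    fun p q hpq => (hx.2 p q hpq).le⟩) isOpen_lhConeStrict

theorem lt_of_mem_interior_lhCone {x : Fin n → ℝ} (hx : x ∈ interior (lhCone n s))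
    {p q : Fin n} (hpq : (q : ℕ) = p + 1) (hs : 0 < s (q + 1)) :
    x p / s (p + 1) < x q / s (q + 1) := by
  have hne : p ≠ q := by rintro rfl; omega
  have hlim : Tendsto (fun t : ℝ => x - t • Pi.single q 1) (𝓝[>] 0) (𝓝 x) := by
    have : Continuous fun t : ℝ => x - t • (Pi.single q 1 : Fin n → ℝ) := by fun_prop
    simpa using (this.tendsto 0).mono_left nhdsWithin_le_nhds
  obtain ⟨t, hmem, ht⟩ :=
    ((hlim.eventually (mem_interior_iff_mem_nhds.1 hx)).and self_mem_nhdsWithin).exists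
  have hle := hmem.2 p q hpq
  simp only [Pi.sub_apply, Pi.smul_apply, Pi.single_eq_same, Pi.single_eq_of_ne hne,
    smul_eq_mul, mul_zero, mul_one, sub_zero] at hle
  calc x p / s (p + 1) ≤ (x q - t) / s (q + 1) := hle
    _ < x q / s (q + 1) := by gcongr; exact sub_lt_self _ ht

/-- A lattice point strictly inside the cone whose ratios `λ_{j+1} / s_{j+1}` are
`1, 2, …, i, u / s_{i+1}, v / s_{i+2}, v + i + 2, v + i + 3, …`; with
`s_{i+1} v - s_{i+2} u = gcd` it is as close to the facet between positions `i` and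
`i + 1` as a lattice point can be. -/
def facetPoint (s : ℕ → ℤ) (i : ℕ) (u v : ℤ) (j : ℕ) : ℤ :=
  if j < i then (j + 1) * s (j + 1) else if j = i then u else if j = i + 1 then v
  else (v + j) * s (j + 1)

theorem facetPoint_pos {i : ℕ} {u v : ℤ} (hs : ∀ j, 0 < s (j + 1)) (hu : i * s (i + 1) < u)
    (huv : s (i + 2) * u < s (i + 1) * v) (j : ℕ) : 0 < facetPoint s i u v j := by
  have hu0 : 0 < u := by nlinarith [hs i]
  have hv0 : 0 < v := pos_of_mul_pos_right (by nlinarith [mul_pos (hs (i + 1)) hu0]) (hs i).le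
  unfold facetPoint
  split_ifs <;> first | assumption | nlinarith [hs j]

theorem facetPoint_mul_lt {i : ℕ} {u v : ℤ} (hs : ∀ j, 0 < s (j + 1)) (hu : i * s (i + 1) < u)
    (huv : s (i + 2) * u < s (i + 1) * v) (j : ℕ) :
    facetPoint s i u v j * s (j + 2) < facetPoint s i u v (j + 1) * s (j + 1) := by
  have hv0 : 0 < v := by simpa [facetPoint] using facetPoint_pos hs hu huv (i + 1)
  have hss := mul_pos (hs j) (hs (j + 1))
  obtain h | rfl | rfl | rfl | h : j + 1 < i ∨ j + 1 = i ∨ j = i ∨ j = i + 1 ∨ i + 1 < j := by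
    omega
  · simp only [facetPoint, if_pos h, if_pos (show j < i by omega)]
    push_cast; nlinarith
  · simp only [facetPoint, lt_add_iff_pos_right, zero_lt_one, if_true, lt_irrefl, if_false]
    push_cast at hu ⊢; nlinarith [hs j]
  · simp [facetPoint]; linarith
  · simp only [facetPoint, show ¬ i + 1 < i by omega, show i + 1 ≠ i by omega,
      show ¬ i + 1 + 1 < i by omega, show i + 1 + 1 ≠ i by omega,
      show i + 1 + 1 ≠ i + 1 by omega, if_false, if_true]
    rw [show i + 1 + 2 = i + 1 + 1 + 1 from rfl]
    push_cast
    have h1 : v < (v + (i + 1 + 1)) * s (i + 1 + 1) := by nlinarith [hs (i + 1)]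
    nlinarith [mul_lt_mul_of_pos_right h1 (hs (i + 2))]
  · simp only [facetPoint, show ¬ j < i by omega, show j ≠ i by omega,
      show j ≠ i + 1 by omega, show ¬ j + 1 < i by omega, show j + 1 ≠ i by omega,
      show j + 1 ≠ i + 1 by omega, if_false]
    push_cast; nlinarith

theorem intCast_mem_interior_lhCone {y : Fin n → ℤ} (hpos : ∀ p, 0 < y p)
    (hs : ∀ j, 0 < s (j + 1))
    (hlt : ∀ p q : Fin n, (q : ℕ) = p + 1 → y p * s (q + 1) < y q * s (p + 1)) :
    (fun p => (y p : ℝ)) ∈ interior (lhCone n s) := by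
  have hsR (j : ℕ) : (0 : ℝ) < s (j + 1) := by exact_mod_cast hs j
  refine lhConeStrict_subset_interior ⟨fun p => div_pos (Int.cast_pos.2 (hpos p)) (hsR p),
    fun p q hpq => ?_⟩
  rw [div_lt_div_iff₀ (hsR p) (hsR q)]
  show (y p : ℝ) * s (q + 1) < (y q : ℝ) * s (p + 1)
  exact_mod_cast hlt p q hpq

theorem mul_sub_mul_nonneg_of_mem_lhCone {x : Fin n → ℝ} (hx : x ∈ lhCone n s)
    (hs : ∀ j, 0 < s (j + 1)) {p q : Fin n} (hpq : (q : ℕ) = p + 1) :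
    0 ≤ s (p + 1) * x q - s (q + 1) * x p := by
  have hsR (j : ℕ) : (0 : ℝ) < s (j + 1) := by exact_mod_cast hs j
  have := hx.2 p q hpq
  rw [div_le_div_iff₀ (hsR p) (hsR q)] at this
  linarith

/-- Positive and a multiple of the gcd, yet at most its value `gcd` at `facetPoint`, since
`facetPoint` minus the Gorenstein point lies in the cone. -/
theorem IsGorensteinPoint.lhCone_mul_sub_mul_eq_gcd (hs : ∀ j, 0 < s (j + 1))
    {m : Fin n → ℤ} (hG : IsGorensteinPoint (lhCone n s) (fun p => (m p : ℝ)))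
    (i : ℕ) (hi : i + 1 < n) :
    s (i + 1) * m ⟨i + 1, hi⟩ - s (i + 2) * m ⟨i, by omega⟩ = Int.gcd (s (i + 1)) (s (i + 2)) := by
  set I : Fin n := ⟨i, by omega⟩
  set J : Fin n := ⟨i + 1, hi⟩
  have hA : 0 < s (i + 1) * m J - s (i + 2) * m I := by
    have h := lt_of_mem_interior_lhCone hG.1 (p := I) (q := J) rfl (hs (i + 1))
    rw [div_lt_div_iff₀ (by exact_mod_cast hs i) (by exact_mod_cast hs (i + 1))] at h
    have h' : m I * s (i + 2) < m J * s (i + 1) := by exact_mod_cast h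
    linarith
  refine le_antisymm ?_ (Int.le_of_dvd hA (dvd_sub (dvd_mul_of_dvd_left (Int.gcd_dvd_left _ _) _)
    (dvd_mul_of_dvd_left (Int.gcd_dvd_right _ _) _)))
  obtain ⟨u, v, hu, huv⟩ :=
    exists_lt_and_mul_sub_mul_eq_gcd (s (i + 1)) (s (i + 2)) (i * s (i + 1)) (hs i)
  have huv' : s (i + 2) * u < s (i + 1) * v := by
    have : (0 : ℤ) < Int.gcd (s (i + 1)) (s (i + 2)) := by
      exact_mod_cast Int.gcd_pos_of_ne_zero_left _ (hs i).ne'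
    linarith
  have hy : (fun p : Fin n => (facetPoint s i u v p : ℝ)) ∈ interior (lhCone n s) ∩ intLattice n :=
    ⟨intCast_mem_interior_lhCone (fun p => facetPoint_pos hs hu huv' p) hs
      (fun p q hpq => by rw [hpq]; exact facetPoint_mul_lt hs hu huv' p), _, rfl⟩
  rw [hG.2.2] at hy
  obtain ⟨_, ⟨hwC, w, rfl⟩, hyw⟩ := hy
  have hw : 0 ≤ s (i + 1) * w J - s (i + 2) * w I := by
    have h : (0 : ℝ) ≤ s (i + 1) * (w J : ℝ) - s (i + 2) * (w I : ℝ) :=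
      mul_sub_mul_nonneg_of_mem_lhCone hwC hs (p := I) (q := J) rfl
    exact_mod_cast h
  have hI : u = m I + w I := by
    have := congrFun hyw I
    simp only [Pi.add_apply, facetPoint, I, lt_irrefl, if_false, if_true] at this
    exact_mod_cast this.symm
  have hJ : v = m J + w J := by
    have := congrFun hyw J
    simp only [Pi.add_apply, facetPoint, J, show ¬ i + 1 < i by omega, show i + 1 ≠ i by omega,
      if_false, if_true] at this
    exact_mod_cast this.symm
  linear_combination huv + hw - s (i + 1) * hJ + s (i + 2) * hI

theorem dvd_gcd_add_mul_gcd_of_isGorensteinCone {ℓ b : ℤ} (hs : ∀ j, 0 < s (j + 1))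
    (hrec : ∀ j, s (j + 2) = ℓ * s (j + 1) + b * s j) (hG : IsGorensteinCone (lhCone n s))
    (k : ℕ) (hk : k + 2 < n) :
    s (k + 2) ∣ Int.gcd (s (k + 2)) (s (k + 3)) + b * Int.gcd (s (k + 1)) (s (k + 2)) := by
  obtain ⟨_, hc⟩ := hG
  obtain ⟨m, rfl⟩ := hc.2.1
  have h₁ := hc.lhCone_mul_sub_mul_eq_gcd hs k (by omega)
  have h₂ := hc.lhCone_mul_sub_mul_eq_gcd hs (k + 1) hk
  exact ⟨m ⟨k + 2, hk⟩ - ℓ * m ⟨k + 1, by omega⟩ - b * m ⟨k, by omega⟩, by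
    rw [← h₁, ← h₂]; linear_combination (-m ⟨k + 1, by omega⟩) * hrec (k + 1)⟩

end LectureHallCone

theorem stmt16_general (ℓ b : ℤ) (hℓ : 0 < ℓ) (hD : 0 ≤ ℓ ^ 2 + 4 * b)
    (s : ℕ → ℤ) (hs0 : s 0 = 0) (hs1 : s 1 = 1)
    (hrec : ∀ j, 2 ≤ j → s j = ℓ * s (j - 1) + b * s (j - 2))
    (hgcd : Int.gcd ℓ b = Int.gcd (ℓ ^ 2) b) :
    (0 < b → ∀ n, 5 ≤ n → ¬ IsGorensteinCone (lhCone n s)) ∧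
    (b < -1 → ∀ n, 6 ≤ n → ¬ IsGorensteinCone (lhCone n s)) := by
  have hrec' (j : ℕ) : s (j + 2) = ℓ * s (j + 1) + b * s j := by
    simpa using hrec (j + 2) (by omega)
  have hs := lucas_pos hℓ hD hs0 hs1 hrec'
  obtain ⟨ℓ₁, hℓ₁⟩ : (Int.gcd ℓ b : ℤ) ∣ ℓ := Int.gcd_dvd_left _ _
  obtain ⟨b₁, hb₁⟩ : (Int.gcd ℓ b : ℤ) ∣ b := Int.gcd_dvd_right _ _
  have hcop := isCoprime_of_gcd_eq_gcd_sq hℓ.ne' hgcd hb₁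
  have hD0 : (0 : ℤ) < Int.gcd ℓ b := by exact_mod_cast Int.gcd_pos_of_ne_zero_left _ hℓ.ne'
  have hDℓ : (Int.gcd ℓ b : ℤ) ≤ ℓ := Int.le_of_dvd hℓ (Int.gcd_dvd_left _ _)
  have hodd := lucas_gcd_odd hs0 hs1 hrec' hD0.le hℓ₁ hb₁ hcop
  have heven := lucas_gcd_even hs0 hs1 hrec' hD0.le hℓ₁ hb₁ hcop
  refine ⟨fun hb n hn hG => ?_, fun hb n hn hG => ?_⟩
  · have h := dvd_gcd_add_mul_gcd_of_isGorensteinCone hs hrec' hG 2 (by omega)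
    rw [heven 1, hodd 1] at h
    exact lucas_four_not_dvd hs0 hs1 hrec' hb hD0 hDℓ (by simpa using h)
  · have h := dvd_gcd_add_mul_gcd_of_isGorensteinCone hs hrec' hG 3 (by omega)
    rw [hodd 2, heven 1] at h
    exact lucas_five_not_dvd hs0 hs1 hrec' hb hD hD0 hDℓ (by simpa using h)

/-- With `ℓ > 0`, `b ≠ 0`, `ℓ² + 4b ≥ 0`, `s` as usual, and
`gcd(ℓ, b) = gcd(ℓ², b)`: if `b > 0` then `C_n^{(s)}` is not Gorenstein for any
`n ≥ 5`, and if `b < -1` then `C_n^{(s)}` is not Gorenstein for any `n ≥ 6`. -/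
theorem stmt16 (ℓ b : ℤ) (hℓ : 0 < ℓ) (hb : b ≠ 0) (hD : 0 ≤ ℓ ^ 2 + 4 * b)
    (s : ℕ → ℤ) (hs0 : s 0 = 0) (hs1 : s 1 = 1)
    (hrec : ∀ j, 2 ≤ j → s j = ℓ * s (j - 1) + b * s (j - 2))
    (hgcd : Int.gcd ℓ b = Int.gcd (ℓ ^ 2) b) :
    (0 < b → ∀ n, 5 ≤ n → ¬ IsGorensteinCone (lhCone n s)) ∧
    (b < -1 → ∀ n, 6 ≤ n → ¬ IsGorensteinCone (lhCone n s)) :=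
  stmt16_general ℓ b hℓ hD s hs0 hs1 hrec hgcd
end
end
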